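/- arXiv:math/0510104 — 10 statements merged into one kernel-verified Lean document; each statement's English description precedes it below -/
import Mathlib

section
/- Let R and S be rings and let φ : R → S be a surjective local ring homomorphism. Then φ(J(R)) = J(S), and for every n ≥ 1 the induced ring homomorphism Mₙ(φ) : Mₙ(R) → Mₙ(S) between the rings of n×n matrices (applying φ entrywise) is a local morphism. -/
/-!
A surjective ring map `φ` is local exactly when `ker φ ⊆ J(R)`: if `φ a` is invertible with
inverse `φ b`, then `a b - 1` and `b a - 1` lie in the kernel, hence in `J(R)`, so `a b` and
`b a` are units and `a` has inverses on both sides. With `ker φ ⊆ J(R)` the maximal left ideals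
of `R` correspond to those of `S`, giving `φ(J(R)) = J(S)`. Finally `Mₙ(φ)` is again surjective,
and its kernel `Mₙ(ker φ)` lies in `Mₙ(J(R)) ⊆ J(Mₙ(R))`.
-/

namespace Ring

variable {R S : Type*} [Ring R] [Ring S]

theorem isUnit_of_sub_one_mem_jacobson {r : R} (h : r - 1 ∈ jacobson R) : IsUnit r := by
  rw [← Ideal.jacobson_bot] at h
  obtain ⟨s, hsr⟩ := Ideal.exists_mul_sub_mem_of_sub_one_mem_jacobson r h
  rw [Ideal.mem_bot, sub_eq_zero] at hsr
  -- `s - 1 = -s (r - 1)` lies in `J` too, so `s` has a left inverse, which must then be `r`.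
  have hs : s - 1 ∈ Ideal.jacobson (⊥ : Ideal R) := by
    have : -s * (r - 1) = s - 1 := by rw [neg_mul, mul_sub, hsr, mul_one, neg_sub]
    exact this ▸ Ideal.mul_mem_left _ (-s) h
  obtain ⟨t, hts⟩ := Ideal.exists_mul_sub_mem_of_sub_one_mem_jacobson s hs
  rw [Ideal.mem_bot, sub_eq_zero] at hts
  have htr : t = r := left_inv_eq_right_inv hts hsr
  exact isUnit_iff_exists.mpr ⟨s, htr ▸ hts, hsr⟩

theorem ker_le_jacobson_of_isLocalHom (f : R →+* S) [IsLocalHom f] :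
    RingHom.ker f ≤ jacobson R := by
  intro x hx
  rw [← Ideal.jacobson_bot, Ideal.mem_jacobson_iff]
  intro y
  have hx : f x = 0 := hx
  obtain ⟨u, hu⟩ : IsUnit (y * x + 1) := .of_map f _ (by simp [hx])
  refine ⟨↑u⁻¹, ?_⟩
  rw [Ideal.mem_bot, sub_eq_zero, mul_assoc, ← mul_add_one, ← hu, Units.inv_mul]

theorem isLocalHom_of_surjective_of_ker_le_jacobson {f : R →+* S} (hf : Function.Surjective f)
    (hker : RingHom.ker f ≤ jacobson R) : IsLocalHom f where
  map_nonunit a ha := by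
    obtain ⟨b, hb⟩ := hf ↑ha.unit⁻¹
    have isUnit_of_map_eq_one {x : R} (hx : f x = 1) : IsUnit x :=
      isUnit_of_sub_one_mem_jacobson (hker (by simp [RingHom.mem_ker, hx]))
    obtain ⟨c, hc⟩ := (isUnit_of_map_eq_one (by simp [hb] : f (a * b) = 1)).exists_right_inv
    obtain ⟨d, hd⟩ := (isUnit_of_map_eq_one (by simp [hb] : f (b * a) = 1)).exists_left_inv
    exact isUnit_iff_exists_and_exists.mpr
      ⟨⟨b * c, by rwa [← mul_assoc]⟩, ⟨d * b, by rwa [mul_assoc]⟩⟩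

theorem image_jacobson_of_surjective_of_ker_le {f : R →+* S} (hf : Function.Surjective f)
    (hker : RingHom.ker f ≤ jacobson R) : f '' (jacobson R : Set R) = jacobson S := by
  have : RingHomSurjective f := ⟨hf⟩
  exact congrArg SetLike.coe (map_jacobson_of_ker_le hker)

end Ring

namespace RingHom

variable {R S : Type*} [Ring R] [Ring S] {n : Type*} [Fintype n] [DecidableEq n]

theorem mapMatrix_surjective {f : R →+* S} (hf : Function.Surjective f) :
    Function.Surjective (f.mapMatrix : Matrix n n R →+* Matrix n n S) :=
  fun N => ⟨N.map (Function.surjInv hf), by ext; simp [Function.surjInv_eq hf]⟩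

theorem ker_mapMatrix (f : R →+* S) :
    ker (f.mapMatrix : Matrix n n R →+* Matrix n n S) = (ker f).matrix n := by
  ext M
  simp [mem_ker, ← Matrix.ext_iff]

theorem ker_mapMatrix_le_jacobson {f : R →+* S} (hker : ker f ≤ Ring.jacobson R) :
    ker (f.mapMatrix : Matrix n n R →+* Matrix n n S) ≤ Ring.jacobson (Matrix n n R) := by
  rw [ker_mapMatrix, ← Ideal.jacobson_bot, ← Ideal.matrix_bot n]
  rw [← Ideal.jacobson_bot] at hker
  exact (Ideal.matrix_monotone n hker).trans (Ideal.matrix_jacobson_le ⊥)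

theorem isLocalHom_mapMatrix_of_surjective {f : R →+* S} (hf : Function.Surjective f)
    [IsLocalHom f] : IsLocalHom (f.mapMatrix : Matrix n n R →+* Matrix n n S) :=
  Ring.isLocalHom_of_surjective_of_ker_le_jacobson (mapMatrix_surjective hf)
    (ker_mapMatrix_le_jacobson (Ring.ker_le_jacobson_of_isLocalHom f))

end RingHom

/-- If `φ : R → S` is a surjective local ring homomorphism, then
`φ(J(R)) = J(S)` and, for every `n ≥ 1`, the induced ring homomorphism
`Mₙ(φ) : Mₙ(R) → Mₙ(S)` (applying `φ` entrywise) is a local morphism. -/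
theorem image_jacobson_eq_and_mapMatrix_local {R S : Type*} [Ring R] [Ring S]
    (φ : R →+* S) (hsurj : Function.Surjective φ)
    (hφ : ∀ r : R, IsUnit (φ r) → IsUnit r) :
    φ '' (Ideal.jacobson (⊥ : Ideal R) : Set R) = (Ideal.jacobson (⊥ : Ideal S) : Set S) ∧
    ∀ n : ℕ, 1 ≤ n → ∀ M : Matrix (Fin n) (Fin n) R,
      IsUnit ((φ.mapMatrix : Matrix (Fin n) (Fin n) R →+* Matrix (Fin n) (Fin n) S) M) →
        IsUnit M := by
  have : IsLocalHom φ := ⟨hφ⟩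
  simp only [Ideal.jacobson_bot]
  refine ⟨Ring.image_jacobson_of_surjective_of_ker_le hsurj
    (Ring.ker_le_jacobson_of_isLocalHom φ), fun n _ M hM => ?_⟩
  have := RingHom.isLocalHom_mapMatrix_of_surjective (n := Fin n) hsurj
  exact hM.of_map _ M
end

section
/- A ring R is semilocal if and only if there exists a local ring homomorphism from R into a semisimple artinian ring. -/
/-!
If `R/J` is semisimple, the projection `R → R/J` is local, because `J` consists of the `x`
with `y * x + 1` invertible for all `y`. Conversely, let `φ : R → S` be local with `S` left
artinian. If `c * t + 1` is not a unit, neither is its image, so right multiplication by it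
kills a nonzero element of the noetherian module `S φ(t)` and cannot map it onto itself: the
left ideal `S φ(t (c t + 1))` is strictly smaller than `S φ(t)`. Taking `t` with `S φ(t)`
minimal shows first that `R/J` is von Neumann regular (with `t = a - a b a`) and then that every
left ideal `I` of `R/J` is generated by an idempotent `e` (with `t` a lift of `1 - e`; otherwise
`I` contains a nonzero idempotent orthogonal to `e`, and enlarging `e` by it shrinks `S φ(t)`).
Left ideals generated by idempotents are direct summands, so `R/J` is semisimple.
-/

universe u

/-- A ring is semilocal if its quotient by the Jacobson radical is a semisimple
(artinian) ring. -/
def IsSemilocalRing (R : Type*) [Ring R] : Prop :=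
  IsSemisimpleRing (TwoSidedIdeal.jacobson (⊥ : TwoSidedIdeal R)).ringCon.Quotient

open Submodule

def IsVonNeumannRegularRing (R : Type*) [Ring R] : Prop :=
  ∀ x : R, ∃ y, x * y * x = x

namespace TwoSidedIdeal

variable {R : Type*} [Ring R]

theorem mem_jacobson_bot {x : R} :
    x ∈ jacobson (⊥ : TwoSidedIdeal R) ↔ ∀ y, IsUnit (y * x + 1) := by
  have left_inv_iff (y z : R) : z * y * x + z - 1 ∈ (⊥ : TwoSidedIdeal R) ↔
      z * (y * x + 1) = 1 := by
    rw [mem_bot, sub_eq_zero, mul_add, mul_one, mul_assoc]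
  simp only [mem_jacobson_iff, left_inv_iff]
  refine ⟨fun h y ↦ ?_, fun h y ↦ (h y).exists_left_inv⟩
  obtain ⟨z, hz⟩ := h y
  -- `z = -(z * y) * x + 1` has a left inverse too, so it is a unit with inverse `y * x + 1`.
  obtain ⟨w, hw⟩ := h (-(z * y))
  rw [show -(z * y) * x + 1 = z by rw [← hz]; noncomm_ring] at hw
  exact isUnit_iff_exists.mpr ⟨z, left_inv_eq_right_inv hw hz ▸ hw, hz⟩

theorem isUnit_of_sub_one_mem_jacobson_bot {r : R}
    (h : r - 1 ∈ jacobson (⊥ : TwoSidedIdeal R)) : IsUnit r := by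
  simpa using mem_jacobson_bot.mp h 1

theorem isLocalHom_ringCon_mk' {I : TwoSidedIdeal R} (hI : I ≤ jacobson ⊥) :
    IsLocalHom I.ringCon.mk' := by
  refine ⟨fun r hr ↦ ?_⟩
  obtain ⟨b, hb⟩ := I.ringCon.mk'_surjective ↑hr.unit⁻¹
  have isUnit_of_map_eq_one {x : R} (hx : I.ringCon.mk' x = 1) : IsUnit x :=
    isUnit_of_sub_one_mem_jacobson_bot <| hI <| by
      rwa [← ker_ringCon_mk' I, mem_ker, map_sub, map_one, sub_eq_zero]
  have hrb := isUnit_of_map_eq_one (x := r * b) (by rw [map_mul, hb, hr.mul_val_inv])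
  have hbr := isUnit_of_map_eq_one (x := b * r) (by rw [map_mul, hb, hr.val_inv_mul])
  exact isUnit_iff_exists_and_exists.mpr
    ⟨⟨b * ↑hrb.unit⁻¹, by rw [← mul_assoc, hrb.mul_val_inv]⟩,
      ⟨↑hbr.unit⁻¹ * b, by rw [mul_assoc, hbr.val_inv_mul]⟩⟩

end TwoSidedIdeal

section Ring

variable {S : Type*} [Ring S]

theorem eq_zero_of_span_singleton_mul_eq [IsNoetherianRing S] {s u w : S}
    (h : span S {s * u} = span S {s}) (hw : w ∈ span S {s}) (hwu : w * u = 0) : w = 0 := by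
  have maps_to (x : S) (hx : x ∈ span S {s}) : x * u ∈ span S {s} := by
    obtain ⟨a, rfl⟩ := mem_span_singleton.mp hx
    rw [← h, smul_eq_mul, mul_assoc]
    exact smul_mem _ a (mem_span_singleton_self _)
  let f := (LinearMap.toSpanSingleton S S u).restrict maps_to
  have hf : Function.Surjective f := by
    rintro ⟨y, hy⟩
    obtain ⟨a, rfl⟩ := mem_span_singleton.mp (h ▸ hy)
    exact ⟨⟨a * s, smul_mem _ a (mem_span_singleton_self _)⟩, Subtype.ext (mul_assoc a s u)⟩
  have := IsNoetherian.injective_of_surjective_endomorphism f hf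
    (a₁ := ⟨w, hw⟩) (a₂ := 0) (Subtype.ext (hwu.trans (zero_mul u).symm))
  simpa using congrArg Subtype.val this

theorem span_singleton_mul_add_one_lt [IsArtinianRing S] {s c : S} (h : ¬IsUnit (c * s + 1)) :
    span S {s * (c * s + 1)} < span S {s} := by
  refine lt_of_le_of_ne ?_ fun heq ↦ ?_
  · rw [span_singleton_le_iff_mem, show s * (c * s + 1) = (s * c + 1) * s by noncomm_ring]
    exact smul_mem _ _ (mem_span_singleton_self s)
  rw [IsArtinianRing.isUnit_iff_isRightRegular, isRightRegular_iff_left_eq_zero_of_mul] at h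
  push Not at h
  obtain ⟨w, hwu, hw0⟩ := h
  have hw : w = (-(w * c)) • s := by
    rw [smul_eq_mul, neg_mul]
    exact eq_neg_of_add_eq_zero_right (by rw [← hwu]; noncomm_ring)
  exact hw0 <| eq_zero_of_span_singleton_mul_eq heq
    (hw ▸ smul_mem _ _ (mem_span_singleton_self s)) hwu

theorem IsSemisimpleRing.of_forall_ideal_eq_span_idempotent
    (h : ∀ I : Ideal S, ∃ e, IsIdempotentElem e ∧ I = Ideal.span {e}) :
    IsSemisimpleRing S := by
  refine (isSemisimpleModule_iff S S).mpr ⟨fun I ↦ ?_⟩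
  obtain ⟨e, he, rfl⟩ := h I
  have : IsIdempotentElem (LinearMap.toSpanSingleton S S e) :=
    LinearMap.isIdempotentElem_map_one_iff.mp (by simpa using he)
  exact ⟨_, by
    rw [← Ideal.submodule_span_eq, ← LinearMap.range_toSpanSingleton]
    exact LinearMap.IsIdempotentElem.isCompl this⟩

theorem IsVonNeumannRegularRing.exists_isIdempotentElem_mem_ne_zero_mul_eq_zero
    (hS : IsVonNeumannRegularRing S) {I : Ideal S} {e : S} (he : IsIdempotentElem e)
    (heI : e ∈ I) (hI : ¬I ≤ Ideal.span {e}) :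
    ∃ h ∈ I, IsIdempotentElem h ∧ h ≠ 0 ∧ e * h = 0 ∧ h * e = 0 := by
  obtain ⟨y, hyI, hye, hy0⟩ : ∃ y ∈ I, y * e = 0 ∧ y ≠ 0 := by
    obtain ⟨x, hxI, hx⟩ := SetLike.not_le_iff_exists.mp hI
    refine ⟨x - x * e, I.sub_mem hxI (I.mul_mem_left x heI), ?_, fun hy ↦ hx ?_⟩
    · rw [sub_mul, mul_assoc, he.eq, sub_self]
    · exact Ideal.mem_span_singleton'.mpr ⟨x, (sub_eq_zero.mp hy).symm⟩
  obtain ⟨z, hz⟩ := hS y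
  have hyh : y * ((1 - e) * z * y) = y := by
    rw [← mul_assoc, ← mul_assoc, mul_sub, mul_one, hye, sub_zero, hz]
  refine ⟨(1 - e) * z * y, I.mul_mem_left _ hyI, ?_, fun h0 ↦ hy0 ?_, ?_, ?_⟩
  · rw [IsIdempotentElem, mul_assoc, hyh]
  · rw [← hyh, h0, mul_zero]
  · rw [← mul_assoc, ← mul_assoc, mul_sub, mul_one, he.eq, sub_self, zero_mul, zero_mul]
  · rw [mul_assoc, hye, mul_zero]

end Ring

section IsLocalHom

variable {R S : Type*} [Ring R] [Ring S] [IsArtinianRing S]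

theorem span_map_mul_mul_add_one_lt (φ : R →+* S) [IsLocalHom φ] {t c : R}
    (h : ¬IsUnit (c * t + 1)) :
    span S {φ (t * (c * t + 1))} < span S {φ t} := by
  rw [← isUnit_map_iff φ, map_add, map_mul, map_one] at h
  simpa only [map_mul, map_add, map_one] using span_singleton_mul_add_one_lt h

theorem isVonNeumannRegularRing_jacobson_quotient_of_isLocalHom
    (φ : R →+* S) [IsLocalHom φ] :
    IsVonNeumannRegularRing (TwoSidedIdeal.jacobson (⊥ : TwoSidedIdeal R)).ringCon.Quotient := by
  have exists_sub_mem (a : R) : ∃ b, a - a * b * a ∈ TwoSidedIdeal.jacobson ⊥ := by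
    obtain ⟨_, ⟨b, rfl⟩, hmin⟩ := IsArtinian.set_has_minimal
      (Set.range fun b ↦ span S {φ (a - a * b * a)}) (Set.range_nonempty _)
    refine ⟨b, TwoSidedIdeal.mem_jacobson_bot.mpr fun c ↦ by_contra fun hc ↦ hmin _ ?_
      (span_map_mul_mul_add_one_lt φ hc)⟩
    -- `t * (c * t + 1) = a - a * b' * a` for `t = a - a * b * a`
    exact ⟨b - (1 - b * a) * c * (1 - a * b), by simp only; congr 3; noncomm_ring⟩
  intro x
  obtain ⟨a, rfl⟩ := RingCon.mk'_surjective _ x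
  obtain ⟨b, hb⟩ := exists_sub_mem a
  rw [← TwoSidedIdeal.ker_ringCon_mk' (TwoSidedIdeal.jacobson ⊥), TwoSidedIdeal.mem_ker,
    map_sub, map_mul, map_mul, sub_eq_zero] at hb
  exact ⟨_, hb.symm⟩

theorem exists_isIdempotentElem_eq_span_of_isLocalHom (φ : R →+* S) [IsLocalHom φ]
    {Q : Type*} [Ring Q] (π : R →+* Q) (hπ : Function.Surjective π)
    (hQ : IsVonNeumannRegularRing Q) (I : Ideal Q) :
    ∃ e, IsIdempotentElem e ∧ I = Ideal.span {e} := by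
  obtain ⟨_, ⟨t, e, heI, he, hte, rfl⟩, hmin⟩ := IsArtinian.set_has_minimal
    {N | ∃ t e, e ∈ I ∧ IsIdempotentElem e ∧ π t = 1 - e ∧ span S {φ t} = N}
    ⟨_, 1, 0, I.zero_mem, .zero, by simp, rfl⟩
  refine ⟨e, he, le_antisymm (by_contra fun hle ↦ ?_) ((span_singleton_le_iff_mem e I).2 heI)⟩
  obtain ⟨h, hhI, hh, hh0, heh, hhe⟩ :=
    hQ.exists_isIdempotentElem_mem_ne_zero_mul_eq_zero he heI hle
  obtain ⟨g, hg⟩ := hπ (-h)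
  have hunit : ¬IsUnit (g * t + 1) := fun hu ↦ hh0 <| by
    have := hu.map π
    rw [map_add, map_mul, hg, hte, map_one, mul_sub, mul_one, neg_mul, hhe, neg_zero, sub_zero,
      neg_add_eq_sub] at this
    simpa using (IsIdempotentElem.iff_eq_one_of_isUnit this).mp hh.one_sub
  -- `t * (g * t + 1)` lifts `(1 - e) * (1 - h) = 1 - (e + h)`
  refine hmin _ ⟨t * (g * t + 1), e + h, I.add_mem heI hhI, he.add hh (by simp [heh, hhe]), ?_,
    rfl⟩ (span_map_mul_mul_add_one_lt φ hunit)
  rw [map_mul, map_add, map_mul, hg, hte, map_one, mul_sub, mul_one, neg_mul, hhe, neg_zero,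
    sub_zero, mul_add, mul_one, mul_neg, sub_mul, one_mul, heh]
  abel

theorem IsSemilocalRing.of_isLocalHom (φ : R →+* S) [IsLocalHom φ] : IsSemilocalRing R :=
  IsSemisimpleRing.of_forall_ideal_eq_span_idempotent <|
    exists_isIdempotentElem_eq_span_of_isLocalHom φ _ (RingCon.mk'_surjective _)
      (isVonNeumannRegularRing_jacobson_quotient_of_isLocalHom φ)

end IsLocalHom

/-- A ring `R` is semilocal if and only if there exists a local ring
homomorphism from `R` into a semisimple artinian ring. -/
theorem isSemilocalRing_iff_exists_local_ringHom (R : Type u) [Ring R] :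
    IsSemilocalRing R ↔
      ∃ (S : Type u) (_ : Ring S) (φ : R →+* S),
        IsSemisimpleRing S ∧ ∀ r : R, IsUnit (φ r) → IsUnit r := by
  refine ⟨fun h ↦ ⟨_, _, _, h, (TwoSidedIdeal.isLocalHom_ringCon_mk' le_rfl).map_nonunit⟩,
    fun ⟨S, _, φ, _, hφ⟩ ↦ ?_⟩
  have : IsLocalHom φ := ⟨hφ⟩
  exact IsSemilocalRing.of_isLocalHom φ
end

section
/- Let φ : R → S be a local ring homomorphism and suppose that S/J(S) is isomorphic as a ring to a product D₁ × ⋯ × Dₖ of finitely many division rings. Then there exist m ≤ k, a subset {i₁, …, iₘ} of {1, …, k} with m distinct elements, division rings D′₁, …, D′ₘ, and injective ring homomorphisms D′ⱼ → D_{iⱼ} for j = 1, …, m, such that R/J(R) is isomorphic as a ring to D′₁ × ⋯ × D′ₘ. -/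
universe u v w

section Aux

variable {A : Type*} [Ring A]

private lemma isUnit_of_left_right {a l r : A} (hl : l * a = 1) (hr : a * r = 1) : IsUnit a := by
  have hlr : l = r := by
    calc l = l * (a * r) := by rw [hr, mul_one]
    _ = (l * a) * r := by rw [mul_assoc]
    _ = r := by rw [hl, one_mul]
  exact ⟨⟨a, r, hr, hlr ▸ hl⟩, rfl⟩

private lemma exists_left_inv_one_add {j : A}
    (hj : j ∈ TwoSidedIdeal.jacobson (⊥ : TwoSidedIdeal A)) :
    ∃ z : A, z * (1 + j) = 1 ∧ z - 1 ∈ TwoSidedIdeal.jacobson (⊥ : TwoSidedIdeal A) := by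
  obtain ⟨z, hz⟩ := TwoSidedIdeal.mem_jacobson_iff.1 hj 1
  rw [TwoSidedIdeal.mem_bot] at hz
  rw [mul_one] at hz
  have hz1 : z * j + z = 1 := by rwa [sub_eq_zero] at hz
  refine ⟨z, ?_, ?_⟩
  · rw [mul_add, mul_one, add_comm]; exact hz1
  · have : z - 1 = -(z * j) := by
      have := hz1
      abel_nf
      abel_nf at this
      linear_combination (norm := abel) this
    rw [this]
    exact TwoSidedIdeal.neg_mem _ (TwoSidedIdeal.mul_mem_left _ _ _ hj)

private lemma isUnit_one_add_of_mem_jacobson_bot {j : A}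
    (hj : j ∈ TwoSidedIdeal.jacobson (⊥ : TwoSidedIdeal A)) : IsUnit (1 + j) := by
  obtain ⟨z, hz1, hz2⟩ := exists_left_inv_one_add hj
  obtain ⟨wz, hwz1, -⟩ := exists_left_inv_one_add hz2
  rw [add_sub_cancel] at hwz1
  -- wz * z = 1, z * (1 + j) = 1
  have hw_eq : wz = 1 + j := by
    calc wz = wz * (z * (1 + j)) := by rw [hz1, mul_one]
    _ = (wz * z) * (1 + j) := by rw [mul_assoc]
    _ = 1 + j := by rw [hwz1, one_mul]
  have hr : (1 + j) * z = 1 := by rw [← hw_eq]; exact hwz1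
  exact isUnit_of_left_right hz1 hr

/-- Units lift along the quotient by the Jacobson radical. -/
private lemma isUnit_of_isUnit_jacobson_quotient {s : A}
    (h : IsUnit ((s : (TwoSidedIdeal.jacobson (⊥ : TwoSidedIdeal A)).ringCon.Quotient))) :
    IsUnit s := by
  set c := (TwoSidedIdeal.jacobson (⊥ : TwoSidedIdeal A)).ringCon with hc
  obtain ⟨u, hu⟩ := h
  obtain ⟨t, ht⟩ := Quotient.exists_rep ((↑u⁻¹ : c.Quotient))
  have ht' : ((t : A) : c.Quotient) = (↑u⁻¹ : c.Quotient) := ht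
  have h1 : ((s * t : A) : c.Quotient) = ((1 : A) : c.Quotient) := by
    rw [RingCon.coe_mul, ← hu, ht', Units.mul_inv, RingCon.coe_one]
  have h2 : ((t * s : A) : c.Quotient) = ((1 : A) : c.Quotient) := by
    rw [RingCon.coe_mul, ← hu, ht', Units.inv_mul, RingCon.coe_one]
  have m1 : s * t - 1 ∈ TwoSidedIdeal.jacobson (⊥ : TwoSidedIdeal A) := by
    rw [← TwoSidedIdeal.rel_iff]
    exact c.eq.1 h1
  have m2 : t * s - 1 ∈ TwoSidedIdeal.jacobson (⊥ : TwoSidedIdeal A) := by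
    rw [← TwoSidedIdeal.rel_iff]
    exact c.eq.1 h2
  have u1 : IsUnit (s * t) := by
    have := isUnit_one_add_of_mem_jacobson_bot m1
    rwa [add_sub_cancel] at this
  have u2 : IsUnit (t * s) := by
    have := isUnit_one_add_of_mem_jacobson_bot m2
    rwa [add_sub_cancel] at this
  obtain ⟨v1, hv1⟩ := u1
  obtain ⟨v2, hv2⟩ := u2
  refine isUnit_of_left_right (l := (v2⁻¹ : Aˣ) * t) (r := t * (v1⁻¹ : Aˣ)) ?_ ?_
  · rw [mul_assoc, ← hv2, Units.inv_mul]
  · rw [← mul_assoc, ← hv1, Units.mul_inv]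

private lemma sandwich {K : Type*} [DivisionRing K] {W : K} (hW : W ≠ 0) (v : K) :
    W * (W⁻¹ * v * W⁻¹) * W = v := by
  rw [mul_assoc W⁻¹ v, mul_inv_cancel_left₀ hW, inv_mul_cancel_right₀ hW]

private lemma sandwich_inv {K : Type*} [DivisionRing K] {W : K} (hW : W ≠ 0) (b : K) :
    W * (W * b * W)⁻¹ * W = b⁻¹ := by
  rw [mul_inv_rev, mul_inv_rev, mul_inv_cancel_left₀ hW, inv_mul_cancel_right₀ hW]

end Aux

/-- Main auxiliary theorem: if a ring `A` admits a local ring homomorphism into a finite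
product of division rings, then `A/J(A)` is a product of division rings, each embedding
into one of the original factors. -/
theorem main_aux' {A : Type*} [Ring A] {k : ℕ} (D : Fin k → Type w)
    [∀ i, DivisionRing (D i)] (ψ : A →+* ∀ i, D i)
    (hψ : ∀ a : A, IsUnit (ψ a) → IsUnit a) :
    ∃ (m : ℕ) (_ : m ≤ k) (ι : Fin m ↪ Fin k) (D' : Fin m → Type w)
      (_ : ∀ j, DivisionRing (D' j)),
      (∀ j : Fin m, ∃ f : D' j →+* D (ι j), Function.Injective f) ∧
      Nonempty ((TwoSidedIdeal.jacobson (⊥ : TwoSidedIdeal A)).ringCon.Quotient ≃+*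
        ((j : Fin m) → D' j)) := by
  classical
  -- the coordinate maps
  set g : ∀ i : Fin k, A →+* D i := fun i => (Pi.evalRingHom D i).comp ψ with hg
  -- the "locality on a subset of coordinates" predicate
  set P : Finset (Fin k) → Prop := fun E => ∀ a : A, (∀ i ∈ E, g i a ≠ 0) → IsUnit a with hP
  have hPuniv : P Finset.univ := by
    intro a ha
    apply hψ
    refine ⟨⟨ψ a, fun i => (ψ a i)⁻¹, funext fun i => ?_, funext fun i => ?_⟩, rfl⟩
    · exact mul_inv_cancel₀ (ha i (Finset.mem_univ i))
    · exact inv_mul_cancel₀ (ha i (Finset.mem_univ i))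
  have hex : ∃ n : ℕ, ∃ E : Finset (Fin k), E.card = n ∧ P E :=
    ⟨Finset.univ.card, Finset.univ, rfl, hPuniv⟩
  obtain ⟨E, hEcard, hPE⟩ := Nat.find_spec hex
  have hmin : ∀ E' : Finset (Fin k), P E' → Nat.find hex ≤ E'.card :=
    fun E' h => Nat.find_min' hex ⟨E', rfl, h⟩
  -- key 1: for each i₀ ∈ E there is an element vanishing exactly at i₀ (within E)
  have key1 : ∀ i₀ ∈ E, ∃ a : A, g i₀ a = 0 ∧ ∀ i ∈ E, i ≠ i₀ → g i a ≠ 0 := by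
    intro i₀ hi₀
    have hnot : ¬ P (E.erase i₀) := by
      intro hcon
      have h1 := hmin _ hcon
      rw [Finset.card_erase_of_mem hi₀, hEcard] at h1
      have h2 : 0 < Nat.find hex := by
        rw [← hEcard]; exact Finset.card_pos.2 ⟨i₀, hi₀⟩
      omega
    have hnot' : ∃ a : A, (∀ i ∈ E.erase i₀, g i a ≠ 0) ∧ ¬IsUnit a := by
      by_contra hall
      push_neg at hall
      exact hnot fun a ha => hall a ha
    obtain ⟨a, ha1, ha2⟩ := hnot' 
    refine ⟨a, ?_, fun i hi hne => ha1 i (Finset.mem_erase.2 ⟨hne, hi⟩)⟩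
    by_contra h0
    refine ha2 (hPE a fun i hi => ?_)
    by_cases hii : i = i₀
    · subst hii; exact h0
    · exact ha1 i (Finset.mem_erase.2 ⟨hii, hi⟩)
  have key1' : ∀ i₀ : Fin k, ∃ a : A,
      i₀ ∈ E → (g i₀ a = 0 ∧ ∀ i ∈ E, i ≠ i₀ → g i a ≠ 0) := by
    intro i₀
    by_cases h : i₀ ∈ E
    · exact (key1 i₀ h).imp fun a ha => fun _ => ha
    · exact ⟨0, fun h' => absurd h' h⟩
  choose cc hcc using key1'
  -- the elements supported (within E) on a single coordinate
  set w : Fin k → A := fun i₀ => ((E.erase i₀).toList.map cc).prod with hw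
  have hmaplist : ∀ (i₀ i : Fin k), g i (w i₀) =
      (((E.erase i₀).toList.map cc).map (g i)).prod := by
    intro i₀ i
    exact map_list_prod (g i) _
  have hw0 : ∀ i₀ ∈ E, ∀ i ∈ E, i ≠ i₀ → g i (w i₀) = 0 := by
    intro i₀ hi₀ i hi hne
    rw [hmaplist]
    apply List.prod_eq_zero
    rw [List.map_map]
    refine List.mem_map.2 ⟨i, ?_, ?_⟩
    · rw [Finset.mem_toList]; exact Finset.mem_erase.2 ⟨hne, hi⟩
    · exact (hcc i hi).1
  have hwne : ∀ i₀ ∈ E, g i₀ (w i₀) ≠ 0 := by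
    intro i₀ hi₀
    rw [hmaplist]
    apply List.prod_ne_zero
    rw [List.map_map]
    intro hmem
    obtain ⟨j, hj, hj0⟩ := List.mem_map.1 hmem
    rw [Finset.mem_toList, Finset.mem_erase] at hj
    exact (hcc j hj.2).2 i₀ hi₀ (fun h => hj.1 h.symm) hj0
  -- key 2: coordinate images are closed under inverses
  have key2 : ∀ i₀ ∈ E, ∀ b : D i₀, b ≠ 0 → (∃ x, g i₀ x = b) → ∃ y, g i₀ y = b⁻¹ := by
    intro i₀ hi₀ b hb ⟨x, hx⟩
    set W : D i₀ := g i₀ (w i₀) with hWdef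
    have hW : W ≠ 0 := hwne i₀ hi₀
    set z : A := w i₀ * x * w i₀ + ∑ j ∈ E.erase i₀, w j with hz
    have hz_i₀ : g i₀ z = W * b * W := by
      rw [hz, map_add, map_mul, map_mul, map_sum, hx]
      rw [Finset.sum_eq_zero, add_zero]
      intro j hj
      rw [Finset.mem_erase] at hj
      exact hw0 j hj.2 i₀ hi₀ (fun h => hj.1 h.symm)
    have hz_ne : ∀ i ∈ E, g i z ≠ 0 := by
      intro i hi
      by_cases hii : i = i₀
      · subst hii
        rw [hz_i₀]
        exact mul_ne_zero (mul_ne_zero hW hb) hW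
      · rw [hz, map_add, map_mul, map_mul, map_sum]
        rw [hw0 i₀ hi₀ i hi hii, zero_mul, mul_zero, zero_add]
        rw [Finset.sum_eq_single_of_mem i (Finset.mem_erase.2 ⟨hii, hi⟩)]
        · exact hwne i hi
        · intro j hj hji
          rw [Finset.mem_erase] at hj
          exact hw0 j hj.2 i hi (fun h => hji h.symm)
    obtain ⟨u, hu⟩ := hPE z hz_ne
    have hinv : g i₀ ((u⁻¹ : Aˣ) : A) = (g i₀ z)⁻¹ := by
      have h1 : g i₀ z * g i₀ ((u⁻¹ : Aˣ) : A) = 1 := by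
        rw [← map_mul, ← hu, Units.mul_inv, map_one]
      exact (inv_eq_of_mul_eq_one_right h1).symm
    refine ⟨w i₀ * ((u⁻¹ : Aˣ) : A) * w i₀, ?_⟩
    rw [map_mul, map_mul, hinv, hz_i₀, ← hWdef]
    exact sandwich_inv hW b
  -- set up the index embedding
  set m : ℕ := E.card with hm
  have hmk : m ≤ k := by
    have := Finset.card_le_univ E
    simpa using this
  set oe := E.orderIsoOfFin rfl with hoe
  set ι : Fin m ↪ Fin k :=
    ⟨fun j => (oe j : Fin k), fun a b h => oe.injective (Subtype.ext h)⟩ with hι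
  have hιE : ∀ j : Fin m, ι j ∈ E := fun j => (oe j).2
  have hE_surj : ∀ i ∈ E, ∃ j : Fin m, ι j = i := by
    intro i hi
    refine ⟨oe.symm ⟨i, hi⟩, ?_⟩
    show ((oe (oe.symm ⟨i, hi⟩)) : Fin k) = i
    rw [OrderIso.apply_symm_apply]
  -- the division rings
  set Dsub : ∀ j : Fin m, Subfield (D (ι j)) := fun j =>
    { (g (ι j)).range with
      inv_mem' := by
        intro x hx
        obtain ⟨a, ha⟩ := hx
        by_cases h0 : x = 0
        · rw [h0, inv_zero]
          exact ⟨0, map_zero _⟩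
        · exact key2 (ι j) (hιE j) x h0 ⟨a, ha⟩ } with hDsub
  have hmemD : ∀ (j : Fin m) (a : A), g (ι j) a ∈ Dsub j := fun j a => ⟨a, rfl⟩
  set ρ : A →+* ∀ j : Fin m, (Dsub j) :=
    Pi.ringHom fun j => (g (ι j)).codRestrict (Dsub j) (hmemD j) with hρ
  have hρ_coord : ∀ (a : A) (j : Fin m), ((ρ a j : D (ι j))) = g (ι j) a := fun a j => rfl
  -- surjectivity of ρ
  have hρ_surj : Function.Surjective ρ := by
    intro v
    have hxj : ∀ j : Fin m, ∃ x : A, g (ι j) x = (v j : D (ι j)) := fun j => (v j).2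
    choose x hx using hxj
    have hyj : ∀ j : Fin m, ∃ y : A,
        g (ι j) y = (g (ι j) (w (ι j)))⁻¹ * (v j : D (ι j)) * (g (ι j) (w (ι j)))⁻¹ := by
      intro j
      obtain ⟨y', hy'⟩ := key2 (ι j) (hιE j) (g (ι j) (w (ι j))) (hwne _ (hιE j))
        ⟨w (ι j), rfl⟩
      exact ⟨y' * x j * y', by rw [map_mul, map_mul, hy', hx]⟩
    choose y hy using hyj
    refine ⟨∑ j : Fin m, w (ι j) * y j * w (ι j), ?_⟩
    funext j
    apply Subtype.ext
    rw [hρ_coord, map_sum]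
    rw [Finset.sum_eq_single_of_mem j (Finset.mem_univ j)]
    · rw [map_mul, map_mul, hy j]
      exact sandwich (hwne _ (hιE j)) _
    · intro j' _ hj'
      have hne : ι j ≠ ι j' := fun h => hj' (ι.injective h.symm)
      rw [map_mul, map_mul, hw0 (ι j') (hιE j') (ι j) (hιE j) hne, zero_mul, zero_mul]
  -- identification of the Jacobson radical with the kernel of ρ
  have hker : ∀ a : A,
      a ∈ TwoSidedIdeal.jacobson (⊥ : TwoSidedIdeal A) ↔ ∀ i ∈ E, g i a = 0 := by
    intro a
    constructor
    · intro ha i hi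
      by_contra hb
      obtain ⟨y', hy'⟩ := key2 i hi (g i a) hb ⟨a, rfl⟩
      obtain ⟨z, hz⟩ := TwoSidedIdeal.mem_jacobson_iff.1 ha (-y')
      rw [TwoSidedIdeal.mem_bot] at hz
      have hgz : g i (z * -y' * a + z - 1) = -1 := by
        rw [map_sub, map_add, map_mul, map_mul, map_neg, hy', map_one]
        rw [mul_assoc, neg_mul, inv_mul_cancel₀ hb, mul_neg, mul_one]
        rw [neg_add_cancel, zero_sub]
      rw [hz, map_zero] at hgz
      have h1 : (1 : D i) = 0 := by
        have := hgz.symm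
        rwa [neg_eq_zero] at this
      exact one_ne_zero h1
    · intro h
      rw [TwoSidedIdeal.mem_jacobson_iff]
      intro yy
      have hu : IsUnit (yy * a + 1) := by
        apply hPE
        intro i hi
        rw [map_add, map_mul, h i hi, mul_zero, zero_add, map_one]
        exact one_ne_zero
      obtain ⟨u, hu⟩ := hu
      refine ⟨((u⁻¹ : Aˣ) : A), ?_⟩
      rw [TwoSidedIdeal.mem_bot]
      have : ((u⁻¹ : Aˣ) : A) * yy * a + ((u⁻¹ : Aˣ) : A) =
          ((u⁻¹ : Aˣ) : A) * (yy * a + 1) := by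
        rw [mul_add, mul_one, mul_assoc]
      rw [this, ← hu, Units.inv_mul, sub_self]
  -- ρ respects the congruence relation
  have hcon : ∀ a b : A,
      (TwoSidedIdeal.jacobson (⊥ : TwoSidedIdeal A)).ringCon a b ↔ ρ a = ρ b := by
    intro a b
    rw [TwoSidedIdeal.rel_iff, hker]
    constructor
    · intro h
      funext j
      apply Subtype.ext
      rw [hρ_coord, hρ_coord]
      have := h (ι j) (hιE j)
      rw [map_sub, sub_eq_zero] at this
      exact this
    · intro h i hi
      obtain ⟨j, rfl⟩ := hE_surj i hi
      rw [map_sub, sub_eq_zero]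
      have := congrFun h j
      rw [Subtype.ext_iff, hρ_coord, hρ_coord] at this
      exact this
  -- build the ring isomorphism
  set c := (TwoSidedIdeal.jacobson (⊥ : TwoSidedIdeal A)).ringCon with hcdef
  have hlift : ∀ q : c.Quotient, ∃ a : A, (a : c.Quotient) = q := fun q => Quotient.exists_rep q
  let F : c.Quotient →+* ∀ j : Fin m, (Dsub j) :=
    { toFun := fun q => Quotient.liftOn q ρ fun a b hab => (hcon a b).1 hab
      map_one' := map_one ρ
      map_mul' := fun x y => Quotient.inductionOn₂ x y fun a b => map_mul ρ a b
      map_zero' := map_zero ρ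
      map_add' := fun x y => Quotient.inductionOn₂ x y fun a b => map_add ρ a b }
  have hF_coe : ∀ a : A, F (a : c.Quotient) = ρ a := fun a => rfl
  have hF_bij : Function.Bijective F := by
    constructor
    · intro q1 q2 hq
      obtain ⟨a, rfl⟩ := hlift q1
      obtain ⟨b, rfl⟩ := hlift q2
      rw [hF_coe, hF_coe] at hq
      exact c.eq.2 ((hcon a b).2 hq)
    · intro v
      obtain ⟨a, ha⟩ := hρ_surj v
      exact ⟨(a : c.Quotient), by rw [hF_coe, ha]⟩
  refine ⟨m, hmk, ι, fun j => (Dsub j), fun j => inferInstance, ?_, ⟨RingEquiv.ofBijective F hF_bij⟩⟩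
  intro j
  exact ⟨(Dsub j).subtype, fun a b h => Subtype.ext h⟩

/-- Let `φ : R → S` be a local ring homomorphism and suppose that `S/J(S)` is
isomorphic, as a ring, to a finite product `D₁ × ⋯ × Dₖ` of division rings. Then there exist
`m ≤ k`, distinct indices `i₁, …, iₘ` in `{1, …, k}`, division rings `D′₁, …, D′ₘ` and
injective ring homomorphisms `D′ⱼ → D_{iⱼ}` such that `R/J(R) ≅ D′₁ × ⋯ × D′ₘ` as rings. -/
theorem quotient_jacobson_pi_divisionRing_of_local {R : Type u} {S : Type v} [Ring R] [Ring S]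
    (φ : R →+* S) (hφ : ∀ r : R, IsUnit (φ r) → IsUnit r)
    (k : ℕ) (D : Fin k → Type w) [∀ i, DivisionRing (D i)]
    (e : (TwoSidedIdeal.jacobson (⊥ : TwoSidedIdeal S)).ringCon.Quotient ≃+* ∀ i, D i) :
    ∃ (m : ℕ) (_ : m ≤ k) (ι : Fin m ↪ Fin k) (D' : Fin m → Type w)
      (_ : ∀ j, DivisionRing (D' j)),
      (∀ j : Fin m, ∃ f : D' j →+* D (ι j), Function.Injective f) ∧
      Nonempty ((TwoSidedIdeal.jacobson (⊥ : TwoSidedIdeal R)).ringCon.Quotient ≃+*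
        ((j : Fin m) → D' j)) := by
  set cS := (TwoSidedIdeal.jacobson (⊥ : TwoSidedIdeal S)).ringCon with hcS
  set ψ : R →+* ∀ i, D i := (e : cS.Quotient →+* ∀ i, D i).comp (cS.mk'.comp φ) with hψdef
  have hψ : ∀ r : R, IsUnit (ψ r) → IsUnit r := by
    intro r hr
    apply hφ
    apply isUnit_of_isUnit_jacobson_quotient (A := S)
    have h1 : IsUnit (e ((cS.mk' (φ r)))) := hr
    have h2 : IsUnit (e.symm (e (cS.mk' (φ r)))) := h1.map (e.symm : (∀ i, D i) →+* cS.Quotient)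
    rwa [RingEquiv.symm_apply_apply] at h2
  exact main_aux' D ψ hψ
end

section
/- Let φ : R → S be a local ring homomorphism and suppose that S/J(S) is isomorphic as a ring to a product D₁ × ⋯ × Dₖ of finitely many division rings. Then for every n ≥ 1 the induced ring homomorphism Mₙ(φ) : Mₙ(R) → Mₙ(S) between the rings of n×n matrices (applying φ entrywise) is a local morphism. -/
universe u v w

namespace Statement4

open Matrix

variable {α : Type*} [Ring α] {β : Type*} [Ring β]

section Blocks
variable {p q : Type*} [DecidableEq p] [Fintype p] [DecidableEq q] [Fintype q]

lemma isUnit_fromBlocks_upper {A : Matrix p p α} (B : Matrix p q α) {D : Matrix q q α}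
    (hA : IsUnit A) (hD : IsUnit D) : IsUnit (fromBlocks A B 0 D) := by
  obtain ⟨a', ha1, ha2⟩ := isUnit_iff_exists.mp hA
  obtain ⟨d', hd1, hd2⟩ := isUnit_iff_exists.mp hD
  refine isUnit_iff_exists.mpr ⟨fromBlocks a' (-(a' * B * d')) 0 d', ?_, ?_⟩
  · rw [fromBlocks_multiply, ← fromBlocks_one, fromBlocks_inj]
    refine ⟨by simp [ha1], ?_, by simp, by simp [hd1]⟩
    simp only [Matrix.mul_neg, ← Matrix.mul_assoc, ha1, Matrix.one_mul, Matrix.zero_mul,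
      Matrix.mul_one]
    simp
  · rw [fromBlocks_multiply, ← fromBlocks_one, fromBlocks_inj]
    refine ⟨by simp [ha2], ?_, by simp, by simp [hd2]⟩
    simp only [Matrix.neg_mul, ← Matrix.mul_assoc, Matrix.zero_mul, Matrix.mul_one]
    have : a' * B * d' * D = a' * B := by rw [Matrix.mul_assoc, hd2, Matrix.mul_one]
    simp [this]

lemma isUnit_fromBlocks_lower {A : Matrix p p α} (C : Matrix q p α) {D : Matrix q q α}
    (hA : IsUnit A) (hD : IsUnit D) : IsUnit (fromBlocks A 0 C D) := by
  obtain ⟨a', ha1, ha2⟩ := isUnit_iff_exists.mp hA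
  obtain ⟨d', hd1, hd2⟩ := isUnit_iff_exists.mp hD
  refine isUnit_iff_exists.mpr ⟨fromBlocks a' 0 (-(d' * C * a')) d', ?_, ?_⟩
  · rw [fromBlocks_multiply, ← fromBlocks_one, fromBlocks_inj]
    refine ⟨by simp [ha1], by simp, ?_, by simp [hd1]⟩
    simp only [Matrix.mul_neg, ← Matrix.mul_assoc, hd1, Matrix.one_mul, Matrix.zero_mul,
      Matrix.mul_one]
    simp
  · rw [fromBlocks_multiply, ← fromBlocks_one, fromBlocks_inj]
    refine ⟨by simp [ha2], by simp, ?_, by simp [hd2]⟩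
    simp only [Matrix.neg_mul, ← Matrix.mul_assoc, Matrix.zero_mul, Matrix.mul_one]
    have : d' * C * a' * A = d' * C := by rw [Matrix.mul_assoc, ha2, Matrix.mul_one]
    simp [this]

lemma isUnit_diag_blocks {A : Matrix p p α} {D : Matrix q q α}
    (h : IsUnit (fromBlocks A 0 0 D)) : IsUnit A ∧ IsUnit D := by
  obtain ⟨V, h1, h2⟩ := isUnit_iff_exists.mp h
  rw [← fromBlocks_toBlocks V, fromBlocks_multiply, ← fromBlocks_one, fromBlocks_inj] at h1 h2
  obtain ⟨h11, -, -, h14⟩ := h1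
  obtain ⟨h21, -, -, h24⟩ := h2
  simp only [Matrix.zero_mul, Matrix.mul_zero, add_zero, zero_add] at h11 h14 h21 h24
  exact ⟨isUnit_iff_exists.mpr ⟨_, h11, h21⟩, isUnit_iff_exists.mpr ⟨_, h14, h24⟩⟩

lemma isUnit_A_of_lower {A : Matrix p p α} {C : Matrix q p α} {D : Matrix q q α}
    (h : IsUnit (fromBlocks A 0 C D)) (hD : IsUnit D) : IsUnit A := by
  obtain ⟨d', hd1, hd2⟩ := isUnit_iff_exists.mp hD
  have h2 : IsUnit (fromBlocks A 0 C D * fromBlocks 1 0 (-(d' * C)) 1) :=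
    h.mul (isUnit_fromBlocks_lower _ isUnit_one isUnit_one)
  have heq : fromBlocks A 0 C D * fromBlocks 1 0 (-(d' * C)) 1 = fromBlocks A 0 0 D := by
    rw [fromBlocks_multiply, fromBlocks_inj]
    refine ⟨by simp, by simp, ?_, by simp⟩
    simp only [Matrix.mul_neg, ← Matrix.mul_assoc, hd1, Matrix.one_mul, Matrix.mul_one]
    simp
  rw [heq] at h2
  exact (isUnit_diag_blocks h2).1

end Blocks



section Perm
variable {m : Type*} [DecidableEq m] [Fintype m]

lemma one_submatrix_comm (σ : m ≃ m) :
    (1 : Matrix m m α).submatrix ⇑σ id = (1 : Matrix m m α).submatrix id ⇑σ.symm := by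
  ext i j
  simp [Matrix.one_apply, Equiv.apply_eq_iff_eq_symm_apply]

lemma perm_mul (σ : m ≃ m) (M : Matrix m m α) :
    (1 : Matrix m m α).submatrix ⇑σ id * M = M.submatrix ⇑σ id := by
  have := Matrix.submatrix_mul_equiv (1 : Matrix m m α) M ⇑σ (Equiv.refl m) id
  simpa using this

lemma isUnit_perm (σ : m ≃ m) : IsUnit ((1 : Matrix m m α).submatrix ⇑σ id) := by
  refine isUnit_iff_exists.mpr ⟨(1 : Matrix m m α).submatrix ⇑σ.symm id, ?_, ?_⟩
  · rw [one_submatrix_comm σ]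
    have := Matrix.submatrix_mul_equiv (1 : Matrix m m α) (1 : Matrix m m α) id σ.symm id
    simpa using this
  · rw [one_submatrix_comm σ.symm]
    have := Matrix.submatrix_mul_equiv (1 : Matrix m m α) (1 : Matrix m m α) id σ id
    simpa using this

lemma isUnit_submatrix_iff (σ : m ≃ m) (M : Matrix m m α) :
    IsUnit (M.submatrix ⇑σ id) ↔ IsUnit M := by
  constructor
  · intro h
    have h2 := (isUnit_perm (α := α) σ.symm).mul h
    rw [perm_mul] at h2
    simpa [Matrix.submatrix_submatrix, Equiv.self_comp_symm] using h2
  · intro h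
    rw [← perm_mul]
    exact (isUnit_perm σ).mul h

end Perm

lemma punit_isUnit_iff (M : Matrix PUnit PUnit α) :
    IsUnit M ↔ IsUnit (M PUnit.unit PUnit.unit) := by
  constructor
  · intro h
    obtain ⟨V, h1, h2⟩ := isUnit_iff_exists.mp h
    have h1' : (M * V) PUnit.unit PUnit.unit = (1 : Matrix PUnit PUnit α) PUnit.unit PUnit.unit :=
      by rw [h1]
    have h2' : (V * M) PUnit.unit PUnit.unit = (1 : Matrix PUnit PUnit α) PUnit.unit PUnit.unit :=
      by rw [h2]
    simp [Matrix.mul_apply, Matrix.one_apply] at h1' h2'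
    exact isUnit_iff_exists.mpr ⟨V PUnit.unit PUnit.unit, h1', h2'⟩
  · intro h
    obtain ⟨b, hb1, hb2⟩ := isUnit_iff_exists.mp h
    refine isUnit_iff_exists.mpr ⟨Matrix.of fun _ _ => b, ?_, ?_⟩ <;>
      · ext i j
        cases i; cases j
        simp [Matrix.mul_apply, Matrix.one_apply, hb1, hb2]

section Schur

def schurAux {n : ℕ} (T : Matrix (Fin (n+1)) (Fin (n+1)) α) (v : α) : Matrix (Fin n) (Fin n) α :=
  Matrix.of fun a b => T a.succ b.succ - T a.succ 0 * v * T 0 b.succ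

lemma mapMatrix_schurAux {n : ℕ} (f : α →+* β) (T : Matrix (Fin (n+1)) (Fin (n+1)) α) (v : α) :
    f.mapMatrix (schurAux T v) = schurAux (f.mapMatrix T) (f v) := by
  ext a b
  simp [schurAux, RingHom.mapMatrix_apply, Matrix.map_apply]

lemma isUnit_schurAux_iff {n : ℕ} (T : Matrix (Fin (n+1)) (Fin (n+1)) α) (v : α)
    (hv1 : T 0 0 * v = 1) (hv2 : v * T 0 0 = 1) : IsUnit T ↔ IsUnit (schurAux T v) := by
  classical
  set e : Fin (n+1) ≃ (Fin n ⊕ PUnit) :=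
    (finSuccEquiv n).trans (Equiv.optionEquivSumPUnit (Fin n)) with he
  set A : Matrix (Fin n) (Fin n) α := Matrix.of fun a b => T a.succ b.succ with hA
  set B : Matrix (Fin n) PUnit α := Matrix.of fun a _ => T a.succ 0 with hB
  set C : Matrix PUnit (Fin n) α := Matrix.of fun _ b => T 0 b.succ with hC
  set Db : Matrix PUnit PUnit α := Matrix.of fun _ _ => T 0 0 with hDb'
  set vD : Matrix PUnit PUnit α := Matrix.of fun _ _ => v with hvD'
  have hre : (Matrix.reindexAlgEquiv ℕ α e) T = fromBlocks A B C Db := by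
    ext i j
    cases i <;> cases j <;>
      simp [Matrix.reindexAlgEquiv_apply, Matrix.reindex_apply, Matrix.submatrix_apply, he,
        hA, hB, hC, hDb']
  have hd1 : Db * vD = 1 := by
    ext i j; cases i; cases j
    simp [Matrix.mul_apply, hDb', hvD', hv1, Matrix.one_apply]
  have hd2 : vD * Db = 1 := by
    ext i j; cases i; cases j
    simp [Matrix.mul_apply, hDb', hvD', hv2, Matrix.one_apply]
  have hDb : IsUnit Db := isUnit_iff_exists.mpr ⟨vD, hd1, hd2⟩
  have hF : IsUnit (fromBlocks (1 : Matrix (Fin n) (Fin n) α) (B * vD) 0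
      (1 : Matrix PUnit PUnit α)) := isUnit_fromBlocks_upper _ isUnit_one isUnit_one
  have hfac : fromBlocks 1 (B * vD) 0 1 * fromBlocks (A - B * vD * C) 0 C Db
      = fromBlocks A B C Db := by
    rw [fromBlocks_multiply, fromBlocks_inj]
    refine ⟨by simp [sub_add_cancel], ?_, by simp, by simp⟩
    simp [Matrix.mul_assoc, hd2]
  have step1 : IsUnit T ↔ IsUnit (fromBlocks A B C Db) := by
    constructor
    · intro h
      have := h.map (Matrix.reindexAlgEquiv ℕ α e).toRingEquiv
      rwa [show (Matrix.reindexAlgEquiv ℕ α e).toRingEquiv T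
        = (Matrix.reindexAlgEquiv ℕ α e) T from rfl, hre] at this
    · intro h
      have := h.map (Matrix.reindexAlgEquiv ℕ α e).symm.toRingEquiv
      rwa [show (Matrix.reindexAlgEquiv ℕ α e).symm.toRingEquiv (fromBlocks A B C Db)
        = (Matrix.reindexAlgEquiv ℕ α e).symm (fromBlocks A B C Db) from rfl, ← hre,
        AlgEquiv.symm_apply_apply] at this
  have step2 : IsUnit (fromBlocks A B C Db) ↔ IsUnit (fromBlocks (A - B * vD * C) 0 C Db) := by
    obtain ⟨F', hF1, hF2⟩ := isUnit_iff_exists.mp hF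
    constructor
    · intro h
      have heq : fromBlocks (A - B * vD * C) 0 C Db = F' * fromBlocks A B C Db := by
        rw [← hfac, ← Matrix.mul_assoc, hF2, Matrix.one_mul]
      rw [heq]
      exact (isUnit_iff_exists.mpr ⟨_, hF2, hF1⟩).mul h
    · intro h
      rw [← hfac]
      exact hF.mul h
  have step3 : IsUnit (fromBlocks (A - B * vD * C) 0 C Db) ↔ IsUnit (A - B * vD * C) := by
    constructor
    · intro h; exact isUnit_A_of_lower h hDb
    · intro h; exact isUnit_fromBlocks_lower _ h hDb
  have hfin : A - B * vD * C = schurAux T v := by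
    ext a b
    simp [schurAux, hA, hB, hC, hvD', Matrix.mul_apply, Matrix.sub_apply]
  rw [step1, step2, step3, hfin]

end Schur

lemma divisionRing_reflect {Q : Type*} [Ring Q] {D : Type*} [DivisionRing D] (χ : Q →+* D)
    (hχ : ∀ q : Q, χ q ≠ 0 → IsUnit q) :
    ∀ (n : ℕ) (M : Matrix (Fin n) (Fin n) Q), IsUnit (χ.mapMatrix M) → IsUnit M := by
  intro n
  induction n with
  | zero =>
    intro M _
    have : M = 1 := by ext i j; exact i.elim0
    exact this ▸ isUnit_one
  | succ n ih =>
    intro M hM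
    have hex : ∃ a, χ (M a 0) ≠ 0 := by
      by_contra hcon
      push_neg at hcon
      obtain ⟨V, hV1, hV2⟩ := isUnit_iff_exists.mp hM
      have h1 : (V * χ.mapMatrix M) 0 0 = (1 : Matrix (Fin (n+1)) (Fin (n+1)) D) 0 0 := by
        rw [hV2]
      rw [Matrix.mul_apply] at h1
      simp [RingHom.mapMatrix_apply, Matrix.map_apply, hcon, Matrix.one_apply] at h1
    obtain ⟨a, ha⟩ := hex
    set σ := Equiv.swap (0 : Fin (n+1)) a with hσ
    set M₁ := M.submatrix ⇑σ id with hM₁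
    have h00 : M₁ 0 0 = M a 0 := by simp [hM₁, Matrix.submatrix_apply, hσ]
    have hu0 : IsUnit (M₁ 0 0) := by rw [h00]; exact hχ _ ha
    obtain ⟨v, hv1, hv2⟩ := isUnit_iff_exists.mp hu0
    have hmm : χ.mapMatrix M₁ = (χ.mapMatrix M).submatrix ⇑σ id := by
      ext i j
      simp [hM₁, RingHom.mapMatrix_apply, Matrix.map_apply, Matrix.submatrix_apply]
    have hM₁u : IsUnit (χ.mapMatrix M₁) := by
      rw [hmm, isUnit_submatrix_iff]; exact hM
    have hvχ1 : (χ.mapMatrix M₁) 0 0 * χ v = 1 := by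
      have : (χ.mapMatrix M₁) 0 0 = χ (M₁ 0 0) := by
        simp [RingHom.mapMatrix_apply, Matrix.map_apply]
      rw [this, ← _root_.map_mul χ, hv1, _root_.map_one]
    have hvχ2 : χ v * (χ.mapMatrix M₁) 0 0 = 1 := by
      have : (χ.mapMatrix M₁) 0 0 = χ (M₁ 0 0) := by
        simp [RingHom.mapMatrix_apply, Matrix.map_apply]
      rw [this, ← _root_.map_mul χ, hv2, _root_.map_one]
    have hSχ := (isUnit_schurAux_iff (χ.mapMatrix M₁) (χ v) hvχ1 hvχ2).mp hM₁u
    rw [← mapMatrix_schurAux] at hSχ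
    have hA' : IsUnit (schurAux M₁ v) := ih _ hSχ
    have hM₁fin : IsUnit M₁ := (isUnit_schurAux_iff M₁ v hv1 hv2).mpr hA'
    rw [hM₁, isUnit_submatrix_iff] at hM₁fin
    exact hM₁fin

lemma lift_one {R : Type u} [Ring R] {ι : Type*} {S : ι → Type w} [∀ i, Ring (S i)]
    (ψ : ∀ i, R →+* S i) (H : ∀ x : R, (∀ i, ψ i x = 1) → IsUnit x) :
    ∀ (n : ℕ) (T : Matrix (Fin n) (Fin n) R), (∀ i, (ψ i).mapMatrix T = 1) → IsUnit T := by
  intro n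
  induction n with
  | zero =>
    intro T _
    have : T = 1 := by ext i j; exact i.elim0
    exact this ▸ isUnit_one
  | succ n ih =>
    intro T hT
    have h00 : IsUnit (T 0 0) := by
      apply H
      intro i
      have h := congrFun (congrFun (hT i) 0) 0
      simpa [RingHom.mapMatrix_apply, Matrix.map_apply, Matrix.one_apply] using h
    obtain ⟨v, hv1, hv2⟩ := isUnit_iff_exists.mp h00
    apply (isUnit_schurAux_iff T v hv1 hv2).mpr
    apply ih
    intro i
    have hmap := mapMatrix_schurAux (ψ i) T v
    rw [hT i] at hmap
    rw [hmap]
    ext a b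
    simp [schurAux, Matrix.one_apply, Fin.succ_ne_zero, Fin.succ_inj]

theorem main : ∀ (k : ℕ) {R : Type u} [Ring R] (D : Fin k → Type w)
    [∀ i, DivisionRing (D i)] (ψ : ∀ i, R →+* D i),
    (∀ r : R, (∀ i, ψ i r ≠ 0) → IsUnit r) →
    ∀ (n : ℕ) (M : Matrix (Fin n) (Fin n) R), (∀ i, IsUnit ((ψ i).mapMatrix M)) → IsUnit M := by
  intro k
  induction k with
  | zero =>
    intro R _ D _ ψ hloc n M _
    have h0 : IsUnit (0 : R) := hloc 0 (fun i => i.elim0)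
    have h01 : (0 : R) = 1 := isUnit_zero_iff.mp h0
    have hsub : ∀ x y : R, x = y := fun x y => by
      rw [← mul_one x, ← mul_one y, ← h01, mul_zero, mul_zero]
    have : M = 1 := by ext i j; exact hsub _ _
    exact this ▸ isUnit_one
  | succ k ih =>
    intro R instR D instD ψ hloc n M hM
    by_cases hc : ∃ i₀, ∀ r : R, (∀ i, i ≠ i₀ → ψ i r ≠ 0) → IsUnit r
    · obtain ⟨i₀, h⟩ := hc
      exact ih (fun j => D (i₀.succAbove j)) (fun j => ψ (i₀.succAbove j))
        (fun r hr => h r (fun i hi => by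
          obtain ⟨j, hj⟩ := Fin.exists_succAbove_eq hi
          exact hj ▸ hr j))
        n M (fun j => hM _)
    · push_neg at hc
      choose r hr1 hr2 using hc
      have hr0 : ∀ i, ψ i (r i) = 0 := by
        intro i
        by_contra hne
        refine hr2 i (hloc (r i) (fun j => ?_))
        by_cases hji : j = i
        · subst hji; exact hne
        · exact hr1 i j hji
      set s : Fin (k+1) → R :=
        fun i => (((List.finRange (k+1)).filter (fun j => j ≠ i)).map r).prod with hs
      have hs1 : ∀ i, ψ i (s i) ≠ 0 := by
        intro i
        rw [hs]
        simp only
        rw [map_list_prod, List.map_map]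
        apply List.prod_ne_zero
        intro h0
        rw [List.mem_map] at h0
        obtain ⟨j, hjmem, hj0⟩ := h0
        rw [List.mem_filter] at hjmem
        have hji : j ≠ i := by simpa using hjmem.2
        exact hr1 j i (Ne.symm hji) hj0
      have hs0 : ∀ i j, j ≠ i → ψ j (s i) = 0 := by
        intro i j hji
        rw [hs]
        simp only
        rw [map_list_prod, List.map_map]
        apply List.prod_eq_zero
        rw [List.mem_map]
        refine ⟨j, ?_, hr0 j⟩
        rw [List.mem_filter]
        exact ⟨List.mem_finRange j, by simpa using hji⟩
      set u := Finset.univ.sum s with hu'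
      have hupsi : ∀ j, ψ j u = ψ j (s j) := by
        intro j
        rw [hu', _root_.map_sum]
        exact Finset.sum_eq_single j (fun i _ hij => hs0 i j (Ne.symm hij))
          (fun h => absurd (Finset.mem_univ j) h)
      have hu : IsUnit u := hloc u (fun j => by rw [hupsi j]; exact hs1 j)
      obtain ⟨uinv, huv1, huv2⟩ := isUnit_iff_exists.mp hu
      set ei : Fin (k+1) → R := fun i => uinv * s i with hei
      have hψe : ∀ j i, ψ j (ei i) = if j = i then 1 else 0 := by
        intro j i
        rw [hei]
        simp only
        rw [_root_.map_mul]
        by_cases hji : j = i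
        · subst hji
          have : ψ j uinv * ψ j (s j) = 1 := by
            rw [← hupsi j, ← _root_.map_mul, huv2, _root_.map_one]
          rw [this, if_pos rfl]
        · rw [hs0 i j hji, mul_zero, if_neg hji]
      have key : ∀ i : Fin (k+1), ∃ Y : Matrix (Fin n) (Fin n) R,
          (ψ i).mapMatrix (Y * M) = 1 ∧ (ψ i).mapMatrix (M * Y) = 1 := by
        intro i
        set ρ := (ψ i).rangeRestrict with hρ
        set χ := ((ψ i).range).subtype with hχdef
        have hcomp : ∀ x : R, χ (ρ x) = ψ i x := fun x => rfl
        have hχloc : ∀ q, χ q ≠ 0 → IsUnit q := by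
          intro q hq
          obtain ⟨x, hx⟩ := RingHom.mem_range.mp q.2
          have hr' : IsUnit (x * ei i + (1 - ei i)) := by
            apply hloc
            intro j
            rw [_root_.map_add, _root_.map_mul, _root_.map_sub, _root_.map_one, hψe j i]
            by_cases hji : j = i
            · rw [if_pos hji, mul_one, sub_self, add_zero, hji, hx]
              exact hq
            · simp [hji]
          have heq : ρ (x * ei i + (1 - ei i)) = q := by
            apply Subtype.ext
            show ψ i (x * ei i + (1 - ei i)) = (q : D i)
            rw [_root_.map_add, _root_.map_mul, _root_.map_sub, _root_.map_one, hψe i i]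
            simp [hx]
          exact heq ▸ hr'.map ρ
        have hMq : IsUnit (χ.mapMatrix (ρ.mapMatrix M)) := by
          have : χ.mapMatrix (ρ.mapMatrix M) = (ψ i).mapMatrix M := by
            ext a b; rfl
          rw [this]; exact hM i
        have hQ : IsUnit (ρ.mapMatrix M) := divisionRing_reflect χ hχloc n _ hMq
        obtain ⟨W, hW1, hW2⟩ := isUnit_iff_exists.mp hQ
        choose Ye hYe using fun (a b : Fin n) => (ψ i).rangeRestrict_surjective (W a b)
        have hYW : ρ.mapMatrix (Matrix.of Ye) = W := by
          ext a b
          exact congrArg Subtype.val (hYe a b)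
        have hpush : ∀ (Z : Matrix (Fin n) (Fin n) R),
            (ψ i).mapMatrix Z = χ.mapMatrix (ρ.mapMatrix Z) := by
          intro Z; ext a b; rfl
        refine ⟨Matrix.of Ye, ?_, ?_⟩
        · rw [hpush, _root_.map_mul, hYW, hW2, _root_.map_one]
        · rw [hpush, _root_.map_mul, hYW, hW1, _root_.map_one]
      choose Y hY1 hY2 using key
      set E : Fin (k+1) → Matrix (Fin n) (Fin n) R :=
        fun i => Matrix.scalar (Fin n) (ei i) with hE
      have hEmap : ∀ (j i : Fin (k+1)),
          (ψ j).mapMatrix (E i) = Matrix.scalar (Fin n) (ψ j (ei i)) := by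
        intro j i
        ext a b
        simp only [hE, RingHom.mapMatrix_apply, Matrix.map_apply, Matrix.scalar_apply,
          Matrix.diagonal_apply, apply_ite (ψ j), _root_.map_zero]
      set YY := Finset.univ.sum (fun i => Y i * E i) with hYY
      have hYM : ∀ j, (ψ j).mapMatrix (YY * M) = 1 := by
        intro j
        rw [hYY, Finset.sum_mul, _root_.map_sum]
        rw [Finset.sum_eq_single j]
        · rw [_root_.map_mul, _root_.map_mul, hEmap j j, hψe j j, if_pos rfl, _root_.map_one,
            Matrix.mul_one, ← _root_.map_mul, hY1 j]
        · intro i _ hij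
          rw [_root_.map_mul, _root_.map_mul, hEmap j i, hψe j i, if_neg (Ne.symm hij), _root_.map_zero,
            Matrix.mul_zero, Matrix.zero_mul]
        · intro h; exact absurd (Finset.mem_univ j) h
      have hMY : ∀ j, (ψ j).mapMatrix (M * YY) = 1 := by
        intro j
        rw [hYY, Finset.mul_sum, _root_.map_sum]
        rw [Finset.sum_eq_single j]
        · rw [← Matrix.mul_assoc, _root_.map_mul, hEmap j j, hψe j j, if_pos rfl, _root_.map_one,
            Matrix.mul_one, hY2 j]
        · intro i _ hij
          rw [← Matrix.mul_assoc, _root_.map_mul, hEmap j i, hψe j i, if_neg (Ne.symm hij), _root_.map_zero,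
            Matrix.mul_zero]
        · intro h; exact absurd (Finset.mem_univ j) h
      have hH : ∀ x : R, (∀ i, ψ i x = 1) → IsUnit x :=
        fun x hx => hloc x (fun i => by rw [hx i]; exact one_ne_zero)
      have hunit1 : IsUnit (YY * M) := lift_one ψ hH n _ hYM
      have hunit2 : IsUnit (M * YY) := lift_one ψ hH n _ hMY
      obtain ⟨v1, hv11, hv12⟩ := isUnit_iff_exists.mp hunit1
      obtain ⟨v2, hv21, hv22⟩ := isUnit_iff_exists.mp hunit2
      have hL : (v1 * YY) * M = 1 := by rw [Matrix.mul_assoc]; exact hv12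
      have hR : M * (YY * v2) = 1 := by rw [← Matrix.mul_assoc]; exact hv21
      have hLR : v1 * YY = YY * v2 := by
        calc v1 * YY = (v1 * YY) * (M * (YY * v2)) := by rw [hR, Matrix.mul_one]
          _ = ((v1 * YY) * M) * (YY * v2) := by simp only [Matrix.mul_assoc]
          _ = YY * v2 := by rw [hL, Matrix.one_mul]
      exact isUnit_iff_exists.mpr ⟨YY * v2, hR, hLR ▸ hL⟩

lemma isUnit_one_add_jacobson_bot {S : Type v} [Ring S] {j : S}
    (hj : j ∈ TwoSidedIdeal.jacobson (⊥ : TwoSidedIdeal S)) : IsUnit (1 + j) := by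
  have key : ∀ x ∈ TwoSidedIdeal.jacobson (⊥ : TwoSidedIdeal S), ∃ z, z * (1 + x) = 1 := by
    intro x hx
    rw [TwoSidedIdeal.mem_jacobson_iff] at hx
    obtain ⟨z, hz⟩ := hx 1
    rw [TwoSidedIdeal.mem_bot] at hz
    refine ⟨z, ?_⟩
    have h1 : z * 1 * x + z = 1 := by
      have := sub_eq_zero.mp hz
      exact this
    rw [mul_one] at h1
    rw [mul_add, mul_one, add_comm]
    exact h1
  obtain ⟨z, hz⟩ := key j hj
  have h1 : z + z * j = 1 := by
    rw [mul_add, mul_one] at hz; exact hz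
  have hz' : z = 1 + -(z * j) := by rw [← h1, add_neg_cancel_right]
  have hmem : -(z * j) ∈ TwoSidedIdeal.jacobson (⊥ : TwoSidedIdeal S) :=
    TwoSidedIdeal.neg_mem _ (TwoSidedIdeal.mul_mem_left _ _ _ hj)
  obtain ⟨w, hw⟩ := key _ hmem
  rw [← hz'] at hw
  have hwz : w = 1 + j := by
    calc w = w * (z * (1 + j)) := by rw [hz, mul_one]
      _ = (w * z) * (1 + j) := by rw [mul_assoc]
      _ = 1 + j := by rw [hw, one_mul]
  refine isUnit_iff_exists.mpr ⟨z, ?_, hz⟩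
  rw [← hwz]
  exact hw

lemma isUnit_of_mk'_jacobson {S : Type v} [Ring S] (x : S)
    (h : IsUnit (((TwoSidedIdeal.jacobson (⊥ : TwoSidedIdeal S)).ringCon).mk' x)) : IsUnit x := by
  set J := TwoSidedIdeal.jacobson (⊥ : TwoSidedIdeal S) with hJ
  obtain ⟨yq, hy1, hy2⟩ := isUnit_iff_exists.mp h
  obtain ⟨y, hy⟩ := Quotient.exists_rep yq
  have hymk : J.ringCon.mk' y = yq := by rw [← hy]; rfl
  have hxy : IsUnit (x * y) := by
    have h1 : J.ringCon.mk' (x * y) = J.ringCon.mk' 1 := by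
      rw [_root_.map_mul, hymk, _root_.map_one, hy1]
    have hrel : J.ringCon (x * y) 1 := (RingCon.eq _).mp h1
    have hmem : x * y - 1 ∈ J := (TwoSidedIdeal.rel_iff J _ _).mp hrel
    have : 1 + (x * y - 1) = x * y := by abel
    exact this ▸ isUnit_one_add_jacobson_bot (hJ ▸ hmem)
  have hyx : IsUnit (y * x) := by
    have h1 : J.ringCon.mk' (y * x) = J.ringCon.mk' 1 := by
      rw [_root_.map_mul, hymk, _root_.map_one, hy2]
    have hrel : J.ringCon (y * x) 1 := (RingCon.eq _).mp h1
    have hmem : y * x - 1 ∈ J := (TwoSidedIdeal.rel_iff J _ _).mp hrel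
    have : 1 + (y * x - 1) = y * x := by abel
    exact this ▸ isUnit_one_add_jacobson_bot (hJ ▸ hmem)
  obtain ⟨p, hp1, hp2⟩ := isUnit_iff_exists.mp hxy
  obtain ⟨q, hq1, hq2⟩ := isUnit_iff_exists.mp hyx
  have hxright : x * (y * p) = 1 := by rw [← mul_assoc]; exact hp1
  have hxleft : (q * y) * x = 1 := by rw [mul_assoc]; exact hq2
  have heq : q * y = y * p := by
    calc q * y = (q * y) * (x * (y * p)) := by rw [hxright, mul_one]
      _ = ((q * y) * x) * (y * p) := by simp only [mul_assoc]
      _ = y * p := by rw [hxleft, one_mul]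
  exact isUnit_iff_exists.mpr ⟨y * p, hxright, heq ▸ hxleft⟩

end Statement4

/-- Let `φ : R → S` be a local ring homomorphism and suppose that `S/J(S)` is
isomorphic, as a ring, to a finite product `D₁ × ⋯ × Dₖ` of division rings. Then for every
`n ≥ 1` the induced ring homomorphism `Mₙ(φ) : Mₙ(R) → Mₙ(S)` (applying `φ` entrywise)
is a local morphism. -/
theorem mapMatrix_local_of_local_of_quotient_pi_divisionRing {R : Type u} {S : Type v}
    [Ring R] [Ring S] (φ : R →+* S) (hφ : ∀ r : R, IsUnit (φ r) → IsUnit r)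
    (k : ℕ) (D : Fin k → Type w) [∀ i, DivisionRing (D i)]
    (e : (TwoSidedIdeal.jacobson (⊥ : TwoSidedIdeal S)).ringCon.Quotient ≃+* ∀ i, D i) :
    ∀ n : ℕ, 1 ≤ n → ∀ M : Matrix (Fin n) (Fin n) R,
      IsUnit ((φ.mapMatrix : Matrix (Fin n) (Fin n) R →+* Matrix (Fin n) (Fin n) S) M) →
        IsUnit M := by
  intro n _ M hM
  set c := (TwoSidedIdeal.jacobson (⊥ : TwoSidedIdeal S)).ringCon with hc
  set θ : R →+* ∀ i, D i := e.toRingHom.comp (c.mk'.comp φ) with hθ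
  set ψ : ∀ i, R →+* D i := fun i => (Pi.evalRingHom D i).comp θ with hψ
  have hloc : ∀ r : R, (∀ i, ψ i r ≠ 0) → IsUnit r := by
    intro r hr
    have hθu : IsUnit (θ r) := by
      refine isUnit_iff_exists.mpr ⟨fun i => (θ r i)⁻¹, ?_, ?_⟩
      · funext i; exact mul_inv_cancel₀ (hr i)
      · funext i; exact inv_mul_cancel₀ (hr i)
    have h2 : IsUnit (c.mk' (φ r)) := by
      have h3 := hθu.map e.symm
      rwa [show e.symm (θ r) = c.mk' (φ r) from e.symm_apply_apply _] at h3
    exact hφ r (Statement4.isUnit_of_mk'_jacobson _ h2)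
  have hmat : ∀ i, IsUnit ((ψ i).mapMatrix M) := by
    intro i
    have hcomp : (ψ i).mapMatrix M
        = ((Pi.evalRingHom D i).comp (e.toRingHom.comp c.mk')).mapMatrix (φ.mapMatrix M) := by
      ext a b; rfl
    rw [hcomp]
    exact hM.map _
  exact Statement4.main k D ψ hloc n M hmat
end

section
/- Let D₁ and D₂ be division rings and let φ : R → D₁ × D₂ be a local ring homomorphism. For i = 1, 2 let τᵢ : R → Dᵢ be the composition of φ with the projection onto Dᵢ. Then either (1) R is a local ring and there exists i ∈ {1, 2} such that τᵢ is a local morphism, in which case the unique maximal ideal of R is ker(τᵢ); or (2) there are division rings D′₁, D′₂ together with injective ring homomorphisms D′ᵢ → Dᵢ such that R/J(R) is isomorphic as a ring to D′₁ × D′₂, and in this case J(R) = ker(φ) and the two maximal (two-sided) ideals of R are ker(τ₁) and ker(τ₂). -/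
universe u v w

/-- Auxiliary: a surjective ring hom whose fibers are exactly a ring congruence
induces a ring isomorphism from the quotient. -/
private noncomputable def ringConQuotientEquivAux {R : Type*} {S : Type*} [Ring R] [Ring S]
    (c : RingCon R) (ψ : R →+* S) (hs : Function.Surjective ψ)
    (h : ∀ x y : R, c x y ↔ ψ x = ψ y) : c.Quotient ≃+* S where
  toFun := fun q => Quotient.liftOn' q ψ fun a b hab => (h a b).1 hab
  invFun := fun s => ((hs s).choose : c.Quotient)
  left_inv := fun q => Quotient.inductionOn' q fun x =>
    c.eq.mpr ((h _ _).2 (hs (ψ x)).choose_spec)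
  right_inv := fun s => (hs s).choose_spec
  map_mul' := fun q r => Quotient.inductionOn₂' q r fun x y => map_mul ψ x y
  map_add' := fun q r => Quotient.inductionOn₂' q r fun x y => map_add ψ x y

/-- Let `φ : R → D₁ × D₂` be a local ring homomorphism into a product of two
division rings and let `τᵢ` be the composition of `φ` with the `i`-th projection. Then either
(1) `R` is a local ring, some `τᵢ` is a local morphism, and the unique maximal ideal of `R`
(the set of non-invertible elements) is `ker τᵢ`; or (2) `R/J(R)` is isomorphic, as a ring, to
a product `D′₁ × D′₂` of division rings embedding in `D₁`, `D₂` respectively, `J(R) = ker φ`,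
and the two maximal ideals of `R` are `ker τ₁` and `ker τ₂`. -/
theorem local_into_product_of_two_divisionRings {R : Type u} {D₁ : Type v} {D₂ : Type w}
    [Ring R] [DivisionRing D₁] [DivisionRing D₂]
    (φ : R →+* D₁ × D₂) (hφ : ∀ r : R, IsUnit (φ r) → IsUnit r) :
    (IsLocalRing R ∧
      (((∀ r : R, IsUnit ((RingHom.fst D₁ D₂).comp φ r) → IsUnit r) ∧
          (RingHom.ker ((RingHom.fst D₁ D₂).comp φ) : Set R) = {r : R | ¬IsUnit r}) ∨
        ((∀ r : R, IsUnit ((RingHom.snd D₁ D₂).comp φ r) → IsUnit r) ∧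
          (RingHom.ker ((RingHom.snd D₁ D₂).comp φ) : Set R) = {r : R | ¬IsUnit r}))) ∨
    ((∃ (D₁' : Type v) (D₂' : Type w) (_ : DivisionRing D₁') (_ : DivisionRing D₂')
        (f₁ : D₁' →+* D₁) (f₂ : D₂' →+* D₂),
        Function.Injective f₁ ∧ Function.Injective f₂ ∧
        Nonempty ((TwoSidedIdeal.jacobson (⊥ : TwoSidedIdeal R)).ringCon.Quotient ≃+*
          D₁' × D₂')) ∧
      Ideal.jacobson (⊥ : Ideal R) = RingHom.ker φ ∧
      RingHom.ker ((RingHom.fst D₁ D₂).comp φ) ≠ RingHom.ker ((RingHom.snd D₁ D₂).comp φ) ∧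
      {I : Ideal R | I.IsMaximal} =
        {RingHom.ker ((RingHom.fst D₁ D₂).comp φ),
         RingHom.ker ((RingHom.snd D₁ D₂).comp φ)}) := by
  classical
  haveI : Nontrivial R := φ.domain_nontrivial
  set τ₁ := (RingHom.fst D₁ D₂).comp φ with hτ₁def
  set τ₂ := (RingHom.snd D₁ D₂).comp φ with hτ₂def
  have hunit : ∀ r : R, τ₁ r ≠ 0 → τ₂ r ≠ 0 → IsUnit r := by
    intro r h1 h2
    refine hφ r ⟨⟨φ r, ((τ₁ r)⁻¹, (τ₂ r)⁻¹), ?_, ?_⟩, rfl⟩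
    · exact Prod.ext (mul_inv_cancel₀ h1) (mul_inv_cancel₀ h2)
    · exact Prod.ext (inv_mul_cancel₀ h1) (inv_mul_cancel₀ h2)
  have hu1 : ∀ r : R, IsUnit r → τ₁ r ≠ 0 := fun r hr => (hr.map τ₁).ne_zero
  have hu2 : ∀ r : R, IsUnit r → τ₂ r ≠ 0 := fun r hr => (hr.map τ₂).ne_zero
  have hnu : ∀ r : R, ¬IsUnit r ↔ (τ₁ r = 0 ∨ τ₂ r = 0) := by
    intro r
    constructor
    · intro h
      by_contra hcon
      push_neg at hcon
      exact h (hunit r hcon.1 hcon.2)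
    · rintro (h | h) hr
      · exact hu1 r hr h
      · exact hu2 r hr h
  by_cases hc : (∀ r : R, τ₁ r = 0 → τ₂ r = 0) ∨ (∀ r : R, τ₂ r = 0 → τ₁ r = 0)
  · left
    rcases hc with h | h
    · -- nonunits = ker τ₂
      have key : ∀ r : R, ¬IsUnit r ↔ τ₂ r = 0 := fun r =>
        ⟨fun hr => ((hnu r).1 hr).elim (h r) id, fun h0 hr => hu2 r hr h0⟩
      haveI : IsLocalRing R := ⟨fun {a b} hab => by
        by_contra hcon
        push_neg at hcon
        have h0 : τ₂ (a + b) = 0 := by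
          rw [map_add, (key a).1 hcon.1, (key b).1 hcon.2, add_zero]
        rw [hab, map_one] at h0
        exact one_ne_zero h0⟩
      refine ⟨this, Or.inr ⟨fun r hr => ?_, ?_⟩⟩
      · by_contra h'
        exact hr.ne_zero ((key r).1 h')
      · ext r
        simp only [SetLike.mem_coe, RingHom.mem_ker, Set.mem_setOf_eq, key r]
    · -- nonunits = ker τ₁
      have key : ∀ r : R, ¬IsUnit r ↔ τ₁ r = 0 := fun r =>
        ⟨fun hr => ((hnu r).1 hr).elim id (h r), fun h0 hr => hu1 r hr h0⟩
      haveI : IsLocalRing R := ⟨fun {a b} hab => by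
        by_contra hcon
        push_neg at hcon
        have h0 : τ₁ (a + b) = 0 := by
          rw [map_add, (key a).1 hcon.1, (key b).1 hcon.2, add_zero]
        rw [hab, map_one] at h0
        exact one_ne_zero h0⟩
      refine ⟨this, Or.inl ⟨fun r hr => ?_, ?_⟩⟩
      · by_contra h'
        exact hr.ne_zero ((key r).1 h')
      · ext r
        simp only [SetLike.mem_coe, RingHom.mem_ker, Set.mem_setOf_eq, key r]
  · right
    push_neg at hc
    obtain ⟨⟨a, ha1, ha2⟩, ⟨b, hb1, hb2⟩⟩ := hc
    have approx₁ : ∀ r : R, τ₁ r ≠ 0 → ∃ x : R, τ₁ x = 0 ∧ IsUnit (r + x) := by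
      intro r hr
      by_cases h2 : τ₂ r = 0
      · exact ⟨a, ha1, hunit _ (by rwa [map_add, ha1, add_zero])
          (by rw [map_add, h2, zero_add]; exact ha2)⟩
      · exact ⟨0, map_zero _, by rw [add_zero]; exact hunit _ hr h2⟩
    have approx₂ : ∀ r : R, τ₂ r ≠ 0 → ∃ x : R, τ₂ x = 0 ∧ IsUnit (r + x) := by
      intro r hr
      by_cases h1 : τ₁ r = 0
      · exact ⟨b, hb1, hunit _ (by rw [map_add, h1, zero_add]; exact hb2)
          (by rwa [map_add, hb1, add_zero])⟩
      · exact ⟨0, map_zero _, by rw [add_zero]; exact hunit _ h1 hr⟩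
    have maxker : ∀ K : Ideal R, (1 : R) ∉ K →
        (∀ r : R, r ∉ K → ∃ x ∈ K, IsUnit (r + x)) → K.IsMaximal := by
      intro K h1 happ
      rw [Ideal.isMaximal_iff]
      refine ⟨h1, fun J x hKJ hxK hxJ => ?_⟩
      obtain ⟨y, hyK, hu⟩ := happ x hxK
      have hxy : x + y ∈ J := J.add_mem hxJ (hKJ hyK)
      have h2 : (↑hu.unit⁻¹ : R) * (x + y) ∈ J := J.mul_mem_left _ hxy
      rwa [IsUnit.val_inv_mul] at h2
    have hk1ne : (1 : R) ∉ RingHom.ker τ₁ := by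
      simp [RingHom.mem_ker]
    have hk2ne : (1 : R) ∉ RingHom.ker τ₂ := by
      simp [RingHom.mem_ker]
    have hmax₁ : (RingHom.ker τ₁).IsMaximal := by
      refine maxker _ hk1ne fun r hr => ?_
      obtain ⟨x, hx, hu⟩ := approx₁ r (by simpa [RingHom.mem_ker] using hr)
      exact ⟨x, by simp [RingHom.mem_ker, hx], hu⟩
    have hmax₂ : (RingHom.ker τ₂).IsMaximal := by
      refine maxker _ hk2ne fun r hr => ?_
      obtain ⟨x, hx, hu⟩ := approx₂ r (by simpa [RingHom.mem_ker] using hr)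
      exact ⟨x, by simp [RingHom.mem_ker, hx], hu⟩
    have hne : RingHom.ker τ₁ ≠ RingHom.ker τ₂ := by
      intro hEq
      have ha' : a ∈ RingHom.ker τ₁ := RingHom.mem_ker.mpr ha1
      rw [hEq] at ha'
      exact ha2 (RingHom.mem_ker.mp ha')
    have hmaxset : {I : Ideal R | I.IsMaximal} = {RingHom.ker τ₁, RingHom.ker τ₂} := by
      ext M
      simp only [Set.mem_setOf_eq, Set.mem_insert_iff, Set.mem_singleton_iff]
      constructor
      · intro hM
        have hsub : ∀ m ∈ M, τ₁ m = 0 ∨ τ₂ m = 0 := fun m hm =>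
          (hnu m).1 fun hu => hM.ne_top (Ideal.eq_top_of_isUnit_mem M hm hu)
        by_cases h1 : ∀ m ∈ M, τ₁ m = 0
        · left
          exact hM.eq_of_le ((Ideal.ne_top_iff_one _).mpr hk1ne)
            (fun m hm => RingHom.mem_ker.mpr (h1 m hm))
        · push_neg at h1
          obtain ⟨m₁, hm₁M, hm₁⟩ := h1
          have hm₁2 : τ₂ m₁ = 0 := (hsub m₁ hm₁M).resolve_left hm₁
          right
          refine hM.eq_of_le ((Ideal.ne_top_iff_one _).mpr hk2ne)
            (fun m hm => RingHom.mem_ker.mpr ?_)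
          by_contra h2
          have hm1 : τ₁ m = 0 := (hsub m hm).resolve_right h2
          have hum : IsUnit (m + m₁) := hunit _
            (by rw [map_add, hm1, zero_add]; exact hm₁)
            (by rw [map_add, hm₁2, add_zero]; exact h2)
          exact hM.ne_top (Ideal.eq_top_of_isUnit_mem M (M.add_mem hm hm₁M) hum)
      · rintro (rfl | rfl)
        · exact hmax₁
        · exact hmax₂
    have hjac : Ideal.jacobson (⊥ : Ideal R) = RingHom.ker φ := by
      have hset : {J : Ideal R | ⊥ ≤ J ∧ J.IsMaximal} = {J : Ideal R | J.IsMaximal} := by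
        ext J; simp
      rw [Ideal.jacobson, hset, hmaxset, sInf_pair]
      ext r
      simp only [Submodule.mem_inf, RingHom.mem_ker]
      constructor
      · intro ⟨h1', h2'⟩
        exact Prod.ext h1' h2'
      · intro hr
        constructor
        · show (φ r).1 = 0
          rw [hr]
          rfl
        · show (φ r).2 = 0
          rw [hr]
          rfl
    -- coprimality
    have hcop : ∃ x y : R, τ₁ x = 0 ∧ τ₂ y = 0 ∧ x + y = 1 := by
      have hu : IsUnit (a + b) := hunit _
        (by rw [map_add, ha1, zero_add]; exact hb2)
        (by rw [map_add, hb1, add_zero]; exact ha2)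
      refine ⟨↑hu.unit⁻¹ * a, ↑hu.unit⁻¹ * b, by rw [map_mul, ha1, mul_zero],
        by rw [map_mul, hb1, mul_zero], ?_⟩
      rw [← mul_add, IsUnit.val_inv_mul]
    obtain ⟨x, y, hx, hy, hxy⟩ := hcop
    have hτ₁y : τ₁ y = 1 := by
      have h' := congrArg τ₁ hxy
      rwa [map_add, hx, zero_add, map_one] at h'
    have hτ₂x : τ₂ x = 1 := by
      have h' := congrArg τ₂ hxy
      rwa [map_add, hy, add_zero, map_one] at h'
    set ψ : R →+* τ₁.range × τ₂.range := (τ₁.rangeRestrict).prod (τ₂.rangeRestrict) with hψdef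
    have hψ1 : ∀ r : R, ((ψ r).1 : D₁) = τ₁ r := fun r => rfl
    have hψ2 : ∀ r : R, ((ψ r).2 : D₂) = τ₂ r := fun r => rfl
    have hsurj : Function.Surjective ψ := by
      rintro ⟨⟨d₁, hd₁⟩, ⟨d₂, hd₂⟩⟩
      obtain ⟨r₁, rfl⟩ := RingHom.mem_range.mp hd₁
      obtain ⟨r₂, rfl⟩ := RingHom.mem_range.mp hd₂
      refine ⟨y * r₁ + x * r₂, Prod.ext (Subtype.ext ?_) (Subtype.ext ?_)⟩
      · show τ₁ (y * r₁ + x * r₂) = τ₁ r₁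
        rw [map_add, map_mul, map_mul, hτ₁y, hx, one_mul, zero_mul, add_zero]
      · show τ₂ (y * r₁ + x * r₂) = τ₂ r₂
        rw [map_add, map_mul, map_mul, hy, hτ₂x, zero_mul, one_mul, zero_add]
    have hcongr : ∀ u v : R, (TwoSidedIdeal.jacobson (⊥ : TwoSidedIdeal R)).ringCon u v ↔
        ψ u = ψ v := by
      intro u v
      rw [TwoSidedIdeal.rel_iff]
      have hmem : u - v ∈ TwoSidedIdeal.jacobson (⊥ : TwoSidedIdeal R) ↔ φ (u - v) = 0 := by
        rw [← TwoSidedIdeal.mem_asIdeal, TwoSidedIdeal.asIdeal_jacobson]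
        have hbot : TwoSidedIdeal.asIdeal (⊥ : TwoSidedIdeal R) = ⊥ := by
          ext z
          simp [TwoSidedIdeal.mem_asIdeal, TwoSidedIdeal.mem_bot]
        rw [hbot, hjac, RingHom.mem_ker]
      rw [hmem, map_sub, sub_eq_zero]
      constructor
      · intro h'
        refine Prod.ext (Subtype.ext ?_) (Subtype.ext ?_)
        · show τ₁ u = τ₁ v
          exact congrArg Prod.fst h'
        · show τ₂ u = τ₂ v
          exact congrArg Prod.snd h'
      · intro h'
        exact Prod.ext (congrArg (fun p : ↥τ₁.range × ↥τ₂.range => (p.1 : D₁)) h')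
          (congrArg (fun p : ↥τ₁.range × ↥τ₂.range => (p.2 : D₂)) h')
    -- division ring structures on the ranges
    haveI hnt₁ : Nontrivial τ₁.range :=
      nontrivial_of_ne 0 1 (fun h' => zero_ne_one (congrArg Subtype.val h'))
    haveI hnt₂ : Nontrivial τ₂.range :=
      nontrivial_of_ne 0 1 (fun h' => zero_ne_one (congrArg Subtype.val h'))
    have hdiv₁ : ∀ z : τ₁.range, IsUnit z ∨ z = 0 := by
      rintro ⟨d, hd⟩
      obtain ⟨r, rfl⟩ := RingHom.mem_range.mp hd
      by_cases h0 : τ₁ r = 0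
      · right; exact Subtype.ext h0
      · left
        obtain ⟨x', hx', hu'⟩ := approx₁ r h0
        have heq : τ₁.rangeRestrict (r + x') = ⟨τ₁ r, hd⟩ :=
          Subtype.ext (by rw [RingHom.coe_rangeRestrict, map_add, hx', add_zero])
        exact heq ▸ hu'.map τ₁.rangeRestrict
    have hdiv₂ : ∀ z : τ₂.range, IsUnit z ∨ z = 0 := by
      rintro ⟨d, hd⟩
      obtain ⟨r, rfl⟩ := RingHom.mem_range.mp hd
      by_cases h0 : τ₂ r = 0
      · right; exact Subtype.ext h0
      · left
        obtain ⟨x', hx', hu'⟩ := approx₂ r h0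
        have heq : τ₂.rangeRestrict (r + x') = ⟨τ₂ r, hd⟩ :=
          Subtype.ext (by rw [RingHom.coe_rangeRestrict, map_add, hx', add_zero])
        exact heq ▸ hu'.map τ₂.rangeRestrict
    letI inst₁ : DivisionRing τ₁.range := DivisionRing.ofIsUnitOrEqZero hdiv₁
    letI inst₂ : DivisionRing τ₂.range := DivisionRing.ofIsUnitOrEqZero hdiv₂
    refine ⟨⟨τ₁.range, τ₂.range, inst₁, inst₂, τ₁.range.subtype, τ₂.range.subtype,
      fun u v h' => Subtype.ext h', fun u v h' => Subtype.ext h',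
      ⟨ringConQuotientEquivAux _ ψ hsurj hcongr⟩⟩, hjac, hne, hmaxset⟩
end

section
/- Let f : R → S be a ring homomorphism and let M be an S-module; regard M as an R-module by restriction of scalars along f. If the endomorphism ring End_R(M) of M as an R-module is semilocal, then the endomorphism ring End_S(M) of M as an S-module is semilocal. -/
open Submodule

theorem isUnit_of_isUnit_mul_of_isUnit_mul {M : Type*} [Monoid M] {a b : M}
    (hab : IsUnit (a * b)) (hba : IsUnit (b * a)) : IsUnit a := by
  have hr : a * (b * ↑hab.unit⁻¹) = 1 := by rw [← mul_assoc, hab.mul_val_inv]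
  have hl : (↑hba.unit⁻¹ * b) * a = 1 := by rw [mul_assoc, hba.val_inv_mul]
  exact isUnit_iff_exists.2 ⟨_, hr, left_inv_eq_right_inv hl hr ▸ hl⟩

theorem isUnit_one_sub_mul_comm {T : Type*} [Ring T] {a b : T} :
    IsUnit (1 - a * b) ↔ IsUnit (1 - b * a) := by
  simpa [spectrum.mem_iff] using
    (spectrum.unit_mem_mul_comm (R := ℤ) (a := a) (b := b) (r := 1)).not

theorem isUnit_one_sub_mul_or_span_lt {A : Type*} [Ring A] [IsDedekindFiniteMonoid A]
    (a x : A) : IsUnit (1 - a * x) ∨ span A {a - a * x * a} < span A {a} := by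
  have hle : span A {a - a * x * a} ≤ span A {a} :=
    (span_singleton_le_iff_mem _ _).2 <|
      mem_span_singleton.2 ⟨1 - a * x, by rw [smul_eq_mul]; noncomm_ring⟩
  refine or_iff_not_imp_right.2 fun hnlt => ?_
  obtain ⟨u, hu⟩ := mem_span_singleton.1 <|
    (hle.lt_or_eq.resolve_left hnlt).ge (mem_span_singleton_self a)
  refine IsUnit.of_mul_eq_one_right (1 + u * a * x) ?_
  calc (1 + u * a * x) * (1 - a * x) = 1 - a * x + u • (a - a * x * a) * x := by
        rw [smul_eq_mul]; noncomm_ring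
    _ = 1 := by rw [hu]; noncomm_ring

namespace TwoSidedIdeal

variable {T : Type*} [Ring T]

theorem isUnit_one_add_of_mem_jacobson_bot {x : T}
    (hx : x ∈ jacobson (⊥ : TwoSidedIdeal T)) : IsUnit (1 + x) := by
  obtain ⟨z, hz⟩ := mem_jacobson_iff.1 hx 1
  have hzx : z * (1 + x) = 1 := by
    rw [mem_bot] at hz; rw [← sub_eq_zero, ← hz]; noncomm_ring
  have hz' : z = 1 + -z * x := by rw [← hzx]; noncomm_ring
  obtain ⟨w, hw⟩ := mem_jacobson_iff.1 (mul_mem_left _ (-z) x hx) 1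
  have hwz : w * z = 1 := by
    rw [mem_bot] at hw; rw [hz', ← sub_eq_zero, ← hw]; noncomm_ring
  have hw' : w = 1 + x := by
    calc w = w * z * (1 + x) := by rw [mul_assoc, hzx, mul_one]
      _ = 1 + x := by rw [hwz, one_mul]
  exact isUnit_iff_exists.2 ⟨z, hw' ▸ hwz, hzx⟩

theorem mem_jacobson_bot_of_forall_isUnit {x : T} (h : ∀ y, IsUnit (1 + y * x)) :
    x ∈ jacobson (⊥ : TwoSidedIdeal T) := by
  refine mem_jacobson_iff.2 fun y => ⟨↑(h y).unit⁻¹, (mem_bot _).2 ?_⟩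
  calc ↑(h y).unit⁻¹ * y * x + ↑(h y).unit⁻¹ - 1
      = ↑(h y).unit⁻¹ * (1 + y * x) - 1 := by noncomm_ring
    _ = 0 := by rw [IsUnit.val_inv_mul, sub_self]

end TwoSidedIdeal

abbrev JacobsonQuotient (T : Type*) [Ring T] : Type _ :=
  (TwoSidedIdeal.jacobson (⊥ : TwoSidedIdeal T)).ringCon.Quotient

namespace JacobsonQuotient

variable {T : Type*} [Ring T]

def mk : T →+* JacobsonQuotient T := RingCon.mk' _

theorem mk_surjective : Function.Surjective (mk : T →+* JacobsonQuotient T) :=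
  RingCon.mk'_surjective _

theorem mk_eq_mk_iff {x y : T} :
    mk x = mk y ↔ x - y ∈ TwoSidedIdeal.jacobson (⊥ : TwoSidedIdeal T) :=
  (RingCon.eq _).trans (TwoSidedIdeal.rel_iff _ _ _)

instance : IsLocalHom (mk : T →+* JacobsonQuotient T) where
  map_nonunit t ht := by
    obtain ⟨s, hs⟩ := mk_surjective (↑ht.unit⁻¹ : JacobsonQuotient T)
    have hone {a b : T} (hab : mk a * mk b = 1) : IsUnit (a * b) := by
      rw [← map_mul, ← map_one mk, mk_eq_mk_iff] at hab
      simpa using TwoSidedIdeal.isUnit_one_add_of_mem_jacobson_bot hab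
    exact isUnit_of_isUnit_mul_of_isUnit_mul (hone (hs ▸ ht.mul_val_inv))
      (hone (hs ▸ ht.val_inv_mul))

theorem eq_zero_of_forall_isUnit_one_sub_mul {b : JacobsonQuotient T}
    (h : ∀ x, IsUnit (1 - x * b)) : b = 0 := by
  obtain ⟨t, rfl⟩ := mk_surjective b
  rw [← map_zero mk, mk_eq_mk_iff, sub_zero]
  refine TwoSidedIdeal.mem_jacobson_bot_of_forall_isUnit fun y => (isUnit_map_iff mk _).1 ?_
  simpa [sub_eq_add_neg] using h (-mk y)

end JacobsonQuotient

def IsVonNeumannRegular (B : Type*) [Ring B] : Prop :=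
  ∀ b : B, ∃ z, b * z * b = b

theorem exists_mul_mul_eq_self_of_sub_mul_mul {B : Type*} [Ring B] {b : B} (y : B)
    (h : ∃ z, (b - b * y * b) * z * (b - b * y * b) = b - b * y * b) :
    ∃ w, b * w * b = b := by
  obtain ⟨z, hz⟩ := h
  refine ⟨y + (1 - y * b) * z * (1 - b * y), ?_⟩
  calc b * (y + (1 - y * b) * z * (1 - b * y)) * b
      = b * y * b + (b - b * y * b) * z * (b - b * y * b) := by noncomm_ring
    _ = b := by rw [hz, add_sub_cancel]

theorem IsVonNeumannRegular.exists_orthogonal_isIdempotentElem {B : Type*} [Ring B]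
    (hB : IsVonNeumannRegular B) {I : Submodule B B} {e b : B} (he : IsIdempotentElem e)
    (heI : e ∈ I) (hbI : b ∈ I) (hb : b ∉ span B {e}) :
    ∃ k ∈ I, IsIdempotentElem k ∧ e * k = 0 ∧ k * e = 0 ∧ k ≠ 0 := by
  set c := b - b * e with hc
  have hcI : c ∈ I := sub_mem hbI (I.smul_mem b heI)
  have hce : c * e = 0 := by rw [hc, sub_mul, mul_assoc, he.eq, sub_self]
  have hc0 : c ≠ 0 := fun h0 => hb (mem_span_singleton.2 ⟨b, (sub_eq_zero.1 h0).symm⟩)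
  clear_value c
  obtain ⟨z, hz⟩ := hB c
  set h := z * c with hh_def
  have hhI : h ∈ I := I.smul_mem z hcI
  have hhe : h * e = 0 := by rw [hh_def, mul_assoc, hce, mul_zero]
  have hch : c * h = c := by rw [hh_def, ← mul_assoc, hz]
  have hh : IsIdempotentElem h := by rw [IsIdempotentElem, hh_def, mul_assoc, ← hh_def, hch]
  clear_value h
  refine ⟨h - e * h, sub_mem hhI (I.smul_mem e hhI), ?_, ?_, ?_, ?_⟩
  · calc (h - e * h) * (h - e * h) = h * h - e * (h * h) - (h * e) * h + e * (h * e) * h := by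
          noncomm_ring
      _ = h - e * h := by rw [hh.eq, hhe]; noncomm_ring
  · rw [mul_sub, ← mul_assoc, he.eq, sub_self]
  · rw [sub_mul, mul_assoc, hhe, mul_zero, sub_self]
  · intro hk
    apply hc0
    calc c = c * (h - e * h) := by rw [mul_sub, ← mul_assoc, hce, zero_mul, sub_zero, hch]
      _ = 0 := by rw [hk, mul_zero]

theorem isSemisimpleRing_of_forall_exists_isIdempotentElem {B : Type*} [Ring B]
    (h : ∀ I : Submodule B B, ∃ e, IsIdempotentElem e ∧ span B {e} = I) :
    IsSemisimpleRing B where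
  exists_isCompl I := by
    obtain ⟨e, he, rfl⟩ := h I
    rw [LinearMap.span_singleton_eq_range]
    exact ⟨_, LinearMap.IsIdempotentElem.isCompl <|
      LinearMap.ext fun x => by simp [mul_assoc, he.eq]⟩

section LocalHom

variable {T A : Type*} [Ring T] [Ring A] [IsArtinianRing A]

theorem isUnit_one_sub_mul_or_span_map_lt (ψ : T →+* A) [IsLocalHom ψ] (t y : T) :
    IsUnit (1 - t * y) ∨ span A {ψ (t - t * y * t)} < span A {ψ t} := by
  rcases isUnit_one_sub_mul_or_span_lt (ψ t) (ψ y) with hu | hlt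
  · exact .inl ((isUnit_map_iff ψ _).1 (by simpa using hu))
  · exact .inr (by simpa using hlt)

namespace JacobsonQuotient

theorem isVonNeumannRegular_of_isLocalHom (ψ : T →+* A) [IsLocalHom ψ] :
    IsVonNeumannRegular (JacobsonQuotient T) := by
  intro b
  obtain ⟨t, rfl⟩ := mk_surjective b
  induction t using (InvImage.wf (fun t => span A {ψ t}) wellFounded_lt).induction with
  | _ t ih =>
    by_cases hall : ∀ x, IsUnit (1 - x * mk t)
    · exact ⟨0, by simp [eq_zero_of_forall_isUnit_one_sub_mul hall]⟩
    obtain ⟨x, hx⟩ := not_forall.1 hall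
    obtain ⟨y, rfl⟩ := mk_surjective x
    rcases isUnit_one_sub_mul_or_span_map_lt ψ t y with hu | hlt
    · exact absurd (isUnit_one_sub_mul_comm.1 (by simpa using hu.map mk)) hx
    · exact exists_mul_mul_eq_self_of_sub_mul_mul (mk y) (by simpa using ih _ hlt)

theorem exists_isIdempotentElem_span_eq (ψ : T →+* A) [IsLocalHom ψ]
    (I : Submodule (JacobsonQuotient T) (JacobsonQuotient T)) :
    ∃ e, IsIdempotentElem e ∧ span _ {e} = I := by
  obtain ⟨_, ⟨t, e, he, heI, hte, rfl⟩, hmin⟩ := wellFounded_lt.has_min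
    {V | ∃ t e, IsIdempotentElem e ∧ e ∈ I ∧ mk t = 1 - e ∧ span A {ψ t} = V}
    ⟨_, 1, 0, .zero, zero_mem I, by simp, rfl⟩
  refine ⟨e, he, le_antisymm ((span_singleton_le_iff_mem _ _).2 heI) fun b hbI =>
    by_contra fun hb => ?_⟩
  obtain ⟨k, hkI, hk, hek, hke, hk0⟩ :=
    (isVonNeumannRegular_of_isLocalHom ψ).exists_orthogonal_isIdempotentElem he heI hbI hb
  obtain ⟨s, rfl⟩ := mk_surjective k
  rcases isUnit_one_sub_mul_or_span_map_lt ψ t s with hu | hlt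
  · have : IsUnit (1 - mk s) := by simpa [hte, sub_mul, hek] using hu.map mk
    exact hk0 (sub_eq_self.1 ((IsIdempotentElem.iff_eq_one_of_isUnit this).1 hk.one_sub))
  · refine hmin _ ⟨t - t * s * t, e + mk s, he.add hk (by simp [hek, hke]), add_mem heI hkI,
      ?_, rfl⟩ hlt
    rw [map_sub, map_mul, map_mul, hte]
    calc 1 - e - (1 - e) * mk s * (1 - e)
        = 1 - e - mk s + e * mk s + mk s * e - e * mk s * e := by noncomm_ring
      _ = 1 - (e + mk s) := by rw [hek, hke, zero_mul]; noncomm_ring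

end JacobsonQuotient

theorem isSemilocalRing_of_isLocalHom (ψ : T →+* A) [IsLocalHom ψ] : IsSemilocalRing T :=
  isSemisimpleRing_of_forall_exists_isIdempotentElem
    (JacobsonQuotient.exists_isIdempotentElem_span_eq ψ)

end LocalHom

namespace Module.End

variable {R S M : Type*} [Ring R] [Ring S] [AddCommGroup M] [Module S M] [Module R M]

def restrictScalarsRingHom (f : R →+* S) (hres : ∀ (r : R) (m : M), r • m = f r • m) :
    Module.End S M →+* Module.End R M where
  toFun g :=
    { toFun := g
      map_add' := g.map_add
      map_smul' r m := by rw [hres, g.map_smul, hres, RingHom.id_apply] }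
  map_one' := rfl
  map_mul' _ _ := rfl
  map_zero' := rfl
  map_add' _ _ := rfl

instance (f : R →+* S) (hres : ∀ (r : R) (m : M), r • m = f r • m) :
    IsLocalHom (restrictScalarsRingHom f hres) where
  map_nonunit g hg := (isUnit_iff g).2 ((isUnit_iff (restrictScalarsRingHom f hres g)).1 hg)

end Module.End

/-- Let `f : R → S` be a ring homomorphism and `M` an `S`-module, regarded as an
`R`-module by restriction of scalars along `f` (i.e. `r • m = f r • m`). If `End_R(M)` is
semilocal, then `End_S(M)` is semilocal. -/
theorem isSemilocalRing_end_of_restrictScalars {R S M : Type*} [Ring R] [Ring S]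
    (f : R →+* S) [AddCommGroup M] [Module S M] [Module R M]
    (hres : ∀ (r : R) (m : M), r • m = f r • m)
    (h : IsSemilocalRing (Module.End R M)) :
    IsSemilocalRing (Module.End S M) := by
  have : IsSemisimpleRing (JacobsonQuotient (Module.End R M)) := h
  let ψ := JacobsonQuotient.mk.comp (Module.End.restrictScalarsRingHom f hres)
  have : IsLocalHom ψ := RingHom.isLocalHom_comp _ _
  exact isSemilocalRing_of_isLocalHom ψ
end

section
/- Let R be a commutative ring with Jacobson radical J = J(R), and let M be a finitely generated R-module. Then the canonical ring homomorphism End_R(M) → End_R(M/JM), sending an endomorphism f of M to the endomorphism of M/JM it induces, is a local morphism. -/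
variable (R M : Type*) [CommRing R] [AddCommGroup M] [Module R M]

/-- The submodule `J(R)·M` of `M`, where `J(R)` is the Jacobson radical of `R`. -/
abbrev jacobsonSmul : Submodule R M := Ideal.jacobson (⊥ : Ideal R) • (⊤ : Submodule R M)

lemma jacobsonSmul_le_comap (f : Module.End R M) :
    jacobsonSmul R M ≤ (jacobsonSmul R M).comap f := by
  rw [← Submodule.map_le_iff_le_comap, Submodule.map_smul'']
  exact Submodule.smul_mono le_rfl le_top

/-- The canonical ring homomorphism `End_R(M) → End_R(M/J(R)M)` sending an endomorphism of `M`
to the endomorphism it induces on `M/J(R)M`. -/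
noncomputable def endToEndQuotJacobson :
    Module.End R M →+* Module.End R (M ⧸ jacobsonSmul R M) where
  toFun f := Submodule.mapQ _ _ f (jacobsonSmul_le_comap R M f)
  map_one' := by
    refine LinearMap.ext fun x => ?_
    obtain ⟨y, rfl⟩ := Submodule.Quotient.mk_surjective (jacobsonSmul R M) x
    simp [Submodule.mapQ_apply]
  map_mul' f g := by
    refine LinearMap.ext fun x => ?_
    obtain ⟨y, rfl⟩ := Submodule.Quotient.mk_surjective (jacobsonSmul R M) x
    simp [Submodule.mapQ_apply]
  map_zero' := by
    refine LinearMap.ext fun x => ?_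
    obtain ⟨y, rfl⟩ := Submodule.Quotient.mk_surjective (jacobsonSmul R M) x
    simp [Submodule.mapQ_apply]
  map_add' f g := by
    refine LinearMap.ext fun x => ?_
    obtain ⟨y, rfl⟩ := Submodule.Quotient.mk_surjective (jacobsonSmul R M) x
    simp [Submodule.mapQ_apply]

/-- For a finitely generated module `M` over a commutative ring `R` with Jacobson
radical `J`, the canonical ring homomorphism `End_R(M) → End_R(M/JM)` is a local morphism. -/
theorem endToEndQuotJacobson_local [Module.Finite R M] :
    ∀ f : Module.End R M, IsUnit (endToEndQuotJacobson R M f) → IsUnit f := by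
  intro f hf
  have hsurj : Function.Surjective f := by
    have hq : Function.Surjective (endToEndQuotJacobson R M f) :=
      ((Module.End.isUnit_iff _).mp hf).2
    have htop : (⊤ : Submodule R M) ≤ LinearMap.range f ⊔
        Ideal.jacobson (⊥ : Ideal R) • (⊤ : Submodule R M) := by
      intro m _
      obtain ⟨x, hx⟩ := hq (Submodule.Quotient.mk m)
      obtain ⟨y, rfl⟩ := Submodule.Quotient.mk_surjective _ x
      have : Submodule.Quotient.mk (p := jacobsonSmul R M) (f y) = Submodule.Quotient.mk m := by
        simpa [endToEndQuotJacobson, Submodule.mapQ_apply] using hx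
      have hmem : m - f y ∈ jacobsonSmul R M :=
        (Submodule.Quotient.eq _).mp this.symm
      have : m = f y + (m - f y) := by abel
      rw [this]
      exact Submodule.add_mem_sup (LinearMap.mem_range_self f y) hmem
    have := Submodule.le_of_le_smul_of_le_jacobson_bot (Module.Finite.fg_top)
      le_rfl htop
    rw [← LinearMap.range_eq_top]
    exact top_le_iff.mp this
  exact (Module.End.isUnit_iff f).mpr
    ⟨OrzechProperty.injective_of_surjective_endomorphism f hsurj, hsurj⟩
end

section
/- Let R be a commutative semilocal ring, let S be a (not necessarily commutative) R-algebra, and let M be an S-module which is finitely generated as an R-module. Then the endomorphism ring End_S(M) is semilocal. -/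
section Ring

variable {B C : Type*} [Ring B] [Ring C]

noncomputable def TwoSidedIdeal.ringConQuotientEquiv (I : TwoSidedIdeal B) :
    I.ringCon.Quotient ≃+* B ⧸ I.asIdeal :=
  (RingCon.congr (.refl B) <| by
      ext x y
      simp [RingCon.comap, RingCon.ker_apply, Ideal.Quotient.eq, I.rel_iff]).trans <|
    RingCon.quotientKerEquivOfSurjective _ Ideal.Quotient.mk_surjective

theorem isSemilocalRing_iff : IsSemilocalRing B ↔ IsSemisimpleRing (B ⧸ Ring.jacobson B) := by
  have h : (TwoSidedIdeal.jacobson (⊥ : TwoSidedIdeal B)).asIdeal = Ring.jacobson B := by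
    rw [TwoSidedIdeal.asIdeal_jacobson, TwoSidedIdeal.bot_asIdeal, Ideal.jacobson_bot]
  exact ((TwoSidedIdeal.ringConQuotientEquiv _).trans (Ideal.quotEquivOfEq h)).isSemisimpleRing_iff

theorem IsArtinianRing.isSemilocalRing [IsArtinianRing B] : IsSemilocalRing B :=
  isSemilocalRing_iff.mpr inferInstance

theorem Ring.le_jacobson_of_forall_isUnit_one_add {I : Ideal B}
    (h : ∀ x ∈ I, IsUnit (1 + x)) : I ≤ Ring.jacobson B := by
  intro x hx
  rw [← Ideal.jacobson_bot, Ideal.mem_jacobson_iff]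
  intro y
  obtain ⟨u, hu⟩ := h (y * x) (I.mul_mem_left y hx)
  refine ⟨↑u⁻¹, ?_⟩
  rw [Ideal.mem_bot]
  calc (↑u⁻¹ : B) * y * x + ↑u⁻¹ - 1 = ↑u⁻¹ * (1 + y * x) - 1 := by noncomm_ring
    _ = 0 := by rw [← hu, Units.inv_mul, sub_self]

theorem isSemilocalRing_of_surjective (φ : B →+* C) (hφ : Function.Surjective φ)
    (hker : RingHom.ker φ ≤ Ring.jacobson B) (hC : IsSemilocalRing C) : IsSemilocalRing B := by
  have : RingHomSurjective φ := ⟨hφ⟩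
  have hJ : RingHom.ker ((Ideal.Quotient.mk (Ring.jacobson C)).comp φ) = Ring.jacobson B := by
    rw [← RingHom.comap_ker, Ideal.mk_ker]
    exact Module.comap_jacobson_of_ker_le (f := φ.toSemilinearMap) hφ hker
  rw [isSemilocalRing_iff] at hC ⊢
  exact ((Ideal.quotEquivOfEq hJ).symm.trans (RingHom.quotientKerEquivOfSurjective
    (Ideal.Quotient.mk_surjective.comp hφ))).symm.isSemisimpleRing

end Ring

section Module

variable {R M : Type*} [CommRing R] [AddCommGroup M] [Module R M]

theorem isArtinian_linearMap_of_finite (N : Type*) [AddCommGroup N] [Module R N]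
    [Module.Finite R M] [IsArtinian R N] : IsArtinian R (M →ₗ[R] N) := by
  obtain ⟨n, g, hg⟩ := Module.Finite.exists_fin (R := R) (M := M)
  refine isArtinian_of_injective (LinearMap.pi fun i : Fin n ↦ LinearMap.applyₗ (g i)) ?_
  intro f f' h
  exact LinearMap.ext_on_range hg (congr_fun h)

theorem isArtinian_quotient_smul_top (I : Ideal R) [IsArtinianRing (R ⧸ I)] [Module.Finite R M] :
    IsArtinian R (M ⧸ I • (⊤ : Submodule R M)) :=
  have : Module.Finite (R ⧸ I) (M ⧸ I • (⊤ : Submodule R M)) :=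
    .of_restrictScalars_finite R _ _
  isArtinian_of_surjective_algebraMap (R := R ⧸ I) Ideal.Quotient.mk_surjective

theorem LinearMap.bijective_of_sub_mem_smul_top {I : Ideal R} (hI : I ≤ Ring.jacobson R)
    [Module.Finite R M] (f : M →ₗ[R] M) (hf : ∀ m, f m - m ∈ I • (⊤ : Submodule R M)) :
    Function.Bijective f := by
  have hsurj : Function.Surjective f := by
    rw [← LinearMap.range_eq_top, eq_top_iff]
    refine Submodule.le_of_le_smul_of_le_jacobson_bot Module.Finite.fg_top
      (hI.trans_eq Ideal.jacobson_bot.symm) fun m _ ↦ ?_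
    rw [← sub_sub_cancel (f m) m]
    exact Submodule.sub_mem _ (Submodule.mem_sup_left ⟨m, rfl⟩) (Submodule.mem_sup_right (hf m))
  exact ⟨OrzechProperty.injective_of_surjective_endomorphism f hsurj, hsurj⟩

variable (S : Type*) [Ring S] [Algebra R S] [Module S M] [IsScalarTower R S M]

variable (M) in
def Module.End.reduceModIdeal (I : Ideal R) :
    Module.End S M →ₐ[R] Module.End R (M ⧸ I • (⊤ : Submodule R M)) where
  toFun f := Submodule.mapQ _ _ (f.restrictScalars R) (Submodule.smul_top_le_comap_smul_top I _)
  map_one' := by ext; rfl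
  map_mul' _ _ := by ext; rfl
  map_zero' := by ext; rfl
  map_add' _ _ := by ext; rfl
  commutes' _ := by ext; rfl

variable {S}

@[simp]
theorem Module.End.reduceModIdeal_apply_mk (I : Ideal R) (f : Module.End S M) (m : M) :
    reduceModIdeal M S I f (Submodule.Quotient.mk m) = Submodule.Quotient.mk (f m) :=
  rfl

theorem Module.End.ker_reduceModIdeal_le_jacobson [Module.Finite R M] {I : Ideal R}
    (hI : I ≤ Ring.jacobson R) :
    RingHom.ker (reduceModIdeal M S I) ≤ Ring.jacobson (Module.End S M) := by
  refine Ring.le_jacobson_of_forall_isUnit_one_add fun f hf ↦ ?_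
  have hfI : ∀ m, f m ∈ I • (⊤ : Submodule R M) := fun m ↦ by
    rw [← Submodule.Quotient.mk_eq_zero, ← reduceModIdeal_apply_mk, RingHom.mem_ker.mp hf,
      LinearMap.zero_apply]
  refine (Module.End.isUnit_iff _).mpr
    (LinearMap.bijective_of_sub_mem_smul_top hI ((1 + f).restrictScalars R) fun m ↦ ?_)
  simpa using hfI m

end Module

/-- Let `R` be a commutative semilocal ring, `S` a (not necessarily commutative)
`R`-algebra, and `M` an `S`-module that is finitely generated as an `R`-module. Then the
endomorphism ring `End_S(M)` is semilocal. -/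
theorem isSemilocalRing_end_algebra_of_finite {R S M : Type*} [CommRing R] [Ring S]
    [Algebra R S] [AddCommGroup M] [Module S M] [Module R M] [IsScalarTower R S M]
    (hR : IsSemilocalRing R) [Module.Finite R M] :
    IsSemilocalRing (Module.End S M) := by
  have : IsSemisimpleRing (R ⧸ Ring.jacobson R) := isSemilocalRing_iff.mp hR
  have : IsArtinian R (M ⧸ Ring.jacobson R • (⊤ : Submodule R M)) :=
    isArtinian_quotient_smul_top _
  have : IsArtinian R (Module.End R (M ⧸ Ring.jacobson R • (⊤ : Submodule R M))) :=
    isArtinian_linearMap_of_finite _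
  let ψ := Module.End.reduceModIdeal M S (Ring.jacobson R)
  have : IsArtinianRing ψ.range :=
    isArtinian_of_tower R (isArtinian_of_injective ψ.range.val.toLinearMap Subtype.val_injective)
  refine isSemilocalRing_of_surjective (C := ψ.range) ψ.rangeRestrict ψ.rangeRestrict_surjective
    ?_ IsArtinianRing.isSemilocalRing
  exact ψ.ker_rangeRestrict.le.trans (Module.End.ker_reduceModIdeal_le_jacobson le_rfl)
end

section
/- Let R be a semilocal ring and let S be a simple R-module. Then there exists an element r ∈ R such that, setting N to be the cyclic R-module R/rR, the quotient N/(N·J(R)) is isomorphic to S as an R-module. -/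
/-
Write `S ≅ R/m` with `m` a maximal left ideal, so `J(R) ⊆ m`. In the semisimple ring `R/J(R)`
every left ideal is principal, so `m = Rr + J(R)` for some `r`. Since `J(R)` is two-sided,
`N·J(R)` is the image of `J(R)` in `N = R/Rr`, hence `N/N·J(R) ≅ R/(Rr + J(R)) = R/m ≅ S`.
-/

namespace Ideal

variable {R : Type*} [Ring R]

theorem exists_eq_span_singleton_sup_ker {T : Type*} [Ring T] [IsPrincipalIdealRing T]
    (f : R →+* T) (hf : Function.Surjective f) (I : Ideal R) (hI : RingHom.ker f ≤ I) :
    ∃ r : R, I = span {r} ⊔ RingHom.ker f := by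
  obtain ⟨t, ht⟩ := (IsPrincipalIdealRing.principal (I.map f)).principal
  obtain ⟨r, rfl⟩ := hf t
  refine ⟨r, ?_⟩
  calc I = comap f (map f I) := by
        rw [comap_map_of_surjective f hf]; exact (sup_eq_left.mpr hI).symm
    _ = comap f (map f (span {r})) := by rw [ht, map_span, Set.image_singleton]
    _ = span {r} ⊔ RingHom.ker f := comap_map_of_surjective f hf _

theorem smul_top_quotient_eq_map (I J : Ideal R) [J.IsTwoSided] :
    J • (⊤ : Submodule R (R ⧸ I)) = Submodule.map I.mkQ (I ⊔ J) := by
  rw [← Submodule.range_mkQ I, LinearMap.range_eq_map, ← Submodule.map_smul'',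
    Submodule.map_sup, Submodule.mkQ_map_self, bot_sup_eq]
  exact congrArg _ (mul_top J)

noncomputable def quotientSmulTopEquiv (I J : Ideal R) [J.IsTwoSided] :
    ((R ⧸ I) ⧸ J • (⊤ : Submodule R (R ⧸ I))) ≃ₗ[R] R ⧸ (I ⊔ J) :=
  (Submodule.quotEquivOfEq _ _ (smul_top_quotient_eq_map I J)).trans
    (Submodule.quotientQuotientEquivQuotient I (I ⊔ J) le_sup_left)

end Ideal

theorem TwoSidedIdeal.ker_ringCon_mk'_eq_asIdeal {R : Type*} [Ring R] (I : TwoSidedIdeal R) :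
    RingHom.ker I.ringCon.mk' = I.asIdeal := by
  ext x
  rw [RingHom.mem_ker, mem_asIdeal, ← mem_ker, ker_ringCon_mk']

theorem IsSemilocalRing.exists_eq_span_singleton_sup_jacobson {R : Type*} [Ring R]
    (hR : IsSemilocalRing R) (I : Ideal R) (hI : Ideal.jacobson ⊥ ≤ I) :
    ∃ r : R, I = Ideal.span {r} ⊔ Ideal.jacobson ⊥ := by
  have : IsSemisimpleRing _ := hR
  have hker : RingHom.ker (TwoSidedIdeal.jacobson (⊥ : TwoSidedIdeal R)).ringCon.mk' =
      Ideal.jacobson ⊥ := by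
    rw [TwoSidedIdeal.ker_ringCon_mk'_eq_asIdeal, TwoSidedIdeal.asIdeal_jacobson]
    rfl
  rw [← hker] at hI ⊢
  exact Ideal.exists_eq_span_singleton_sup_ker _ (RingCon.mk'_surjective _) I hI

/-- Let `R` be a semilocal ring and `S` a simple `R`-module. Then there is an
element `r ∈ R` such that, for the cyclic module `N = R/rR`, the quotient `N/(N·J(R))` is
isomorphic to `S` as an `R`-module. -/
theorem exists_cyclic_quotient_jacobson_iso_simple {R S : Type*} [Ring R]
    (hR : IsSemilocalRing R) [AddCommGroup S] [Module R S] [IsSimpleModule R S] :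
    ∃ r : R,
      Nonempty (((R ⧸ Ideal.span {r}) ⧸
        (Ideal.jacobson (⊥ : Ideal R) • (⊤ : Submodule R (R ⧸ Ideal.span {r})))) ≃ₗ[R] S) := by
  obtain ⟨m, hm, ⟨e⟩⟩ := isSimpleModule_iff_quot_maximal.mp ‹IsSimpleModule R S›
  have hJm : Ideal.jacobson (⊥ : Ideal R) ≤ m :=
    Ideal.jacobson_bot (R := R) ▸ Ring.jacobson_le_of_isMaximal m
  obtain ⟨r, hr⟩ := hR.exists_eq_span_singleton_sup_jacobson m hJm
  exact ⟨r, ⟨(Ideal.quotientSmulTopEquiv (Ideal.span {r}) (Ideal.jacobson ⊥)).trans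
    ((Submodule.quotEquivOfEq _ _ hr.symm).trans e.symm)⟩⟩
end

section
/- Let R be a semilocal ring and let M be a finitely generated R-module. Then there exist a finitely presented R-module N and a nonnegative integer n such that M/(M·J(R)) ⊕ N/(N·J(R)) is isomorphic, as an R-module, to the free (R/J(R))-module (R/J(R))ⁿ. -/
universe u v

/-!
Choose a surjection `Rⁿ ↠ M` with kernel `K` and put `J = J(R)`. The module `Q = Rⁿ/JRⁿ ≅ (R/J)ⁿ`
is finitely generated and semisimple, so the image `K̄` of `K` in `Q` has a complement `C`, and
`M/JM ≅ Q/K̄`. Lifting finitely many generators of `C` to `Rⁿ` gives a finitely generated `L`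
with image `C`; then `N = Rⁿ/L` is finitely presented, `N/JN ≅ Q/C`, and `Q/K̄ × Q/C ≅ Q`.
-/

namespace IsSemilocalRing

variable {R : Type*} [Ring R]

theorem isSemisimpleRing_quotient_jacobson (hR : IsSemilocalRing R) :
    IsSemisimpleRing (R ⧸ Ideal.jacobson (⊥ : Ideal R)) := by
  let c := (TwoSidedIdeal.jacobson (⊥ : TwoSidedIdeal R)).ringCon
  have : IsSemisimpleRing c.Quotient := hR
  have hle : c ≤ RingCon.ker (Ideal.Quotient.mk (Ideal.jacobson (⊥ : Ideal R))) := by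
    intro x y hxy
    rw [RingCon.ker_apply, Ideal.Quotient.eq, ← TwoSidedIdeal.bot_asIdeal,
      ← TwoSidedIdeal.asIdeal_jacobson]
    exact (TwoSidedIdeal.rel_iff _ x y).mp hxy
  exact RingHom.isSemisimpleRing_of_surjective (RingCon.lift c _ hle)
    (Function.Surjective.of_comp (g := c.mk') Ideal.Quotient.mk_surjective)

theorem isSemisimpleModule_quotient_jacobson_smul_top (hR : IsSemilocalRing R)
    (M : Type*) [AddCommGroup M] [Module R M] :
    IsSemisimpleModule R (M ⧸ Ideal.jacobson (⊥ : Ideal R) • (⊤ : Submodule R M)) :=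
  have := hR.isSemisimpleRing_quotient_jacobson
  (Module.isTorsionBySet_quotient_ideal_smul M _).isSemisimpleModule_iff.mp inferInstance

end IsSemilocalRing

open Submodule

section

variable {R A B : Type*} [Ring R] [AddCommGroup A] [Module R A] [AddCommGroup B] [Module R B]

theorem Ideal.smul_top_eq_pi (I : Ideal R) [I.IsTwoSided] (ι : Type*) [Finite ι] :
    I • (⊤ : Submodule R (ι → R)) = Submodule.pi Set.univ fun _ => I := by
  classical
  cases nonempty_fintype ι
  refine le_antisymm (smul_le.mpr fun r hr f _ i _ => I.mul_mem_right (f i) hr) fun f hf => ?_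
  rw [pi_eq_sum_univ f]
  exact Submodule.sum_mem _ fun i _ => smul_mem_smul (hf i trivial) mem_top

noncomputable def Ideal.quotientSMulTopPiEquiv (I : Ideal R) [I.IsTwoSided] (ι : Type*)
    [Finite ι] : ((ι → R) ⧸ I • (⊤ : Submodule R (ι → R))) ≃ₗ[R] (ι → R ⧸ I) :=
  let π : (ι → R) →ₗ[R] (ι → R ⧸ I) := LinearMap.pi fun i => I.mkQ ∘ₗ LinearMap.proj i
  have hker : LinearMap.ker π = I • ⊤ := by
    ext f
    simp [π, I.smul_top_eq_pi, funext_iff, Ideal.Quotient.eq_zero_iff_mem]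
  have hπ : Function.Surjective π := fun g => by
    choose f hf using fun i => I.mkQ_surjective (g i)
    exact ⟨f, funext hf⟩
  Submodule.quotEquivOfEq _ _ hker.symm ≪≫ₗ π.quotKerEquivOfSurjective hπ

noncomputable def Submodule.quotientSMulTopEquivOfSurjective (I : Ideal R) {p : A →ₗ[R] B}
    (hp : Function.Surjective p) :
    (B ⧸ I • (⊤ : Submodule R B)) ≃ₗ[R]
      (A ⧸ I • (⊤ : Submodule R A)) ⧸ (LinearMap.ker p).map (I • ⊤ : Submodule R A).mkQ :=
  have hker : LinearMap.ker ((I • ⊤ : Submodule R B).mkQ ∘ₗ p) = I • ⊤ ⊔ LinearMap.ker p := by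
    rw [LinearMap.ker_comp, ker_mkQ, ← comap_map_eq, map_smul'', map_top,
      LinearMap.range_eq_top.mpr hp]
  (LinearMap.quotKerEquivOfSurjective ((I • ⊤ : Submodule R B).mkQ ∘ₗ p)
    ((mkQ_surjective _).comp hp)).symm ≪≫ₗ
    quotEquivOfEq _ _ hker ≪≫ₗ (quotientQuotientEquivQuotientSup _ _).symm

noncomputable def Submodule.quotientProdQuotientEquivOfIsCompl {p q : Submodule R A}
    (h : IsCompl p q) : ((A ⧸ p) × (A ⧸ q)) ≃ₗ[R] A :=
  (quotientEquivOfIsCompl p q h).prodCongr (quotientEquivOfIsCompl q p h.symm) ≪≫ₗ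
    prodEquivOfIsCompl q p h.symm

theorem Submodule.exists_fg_map_eq_of_surjective {f : A →ₗ[R] B} (hf : Function.Surjective f)
    {c : Submodule R B} (hc : c.FG) : ∃ L : Submodule R A, L.FG ∧ L.map f = c := by
  obtain ⟨s, rfl⟩ := hc
  refine ⟨span R (Function.surjInv hf '' s), fg_span (s.finite_toSet.image _), ?_⟩
  rw [map_span, Set.image_image]
  simp only [Function.surjInv_eq hf, Set.image_id']

end

/-- Let `R` be a semilocal ring and `M` a finitely generated `R`-module. Then
there exist a finitely presented `R`-module `N` and `n ≥ 0` such that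
`M/(M·J(R)) ⊕ N/(N·J(R))` is isomorphic, as an `R`-module, to the free `R/J(R)`-module
`(R/J(R))ⁿ`. -/
theorem exists_finitePresentation_quotient_jacobson_free {R : Type u} {M : Type v} [Ring R]
    (hR : IsSemilocalRing R) [AddCommGroup M] [Module R M] [Module.Finite R M] :
    ∃ (N : Type u) (_ : AddCommGroup N) (_ : Module R N) (_ : Module.FinitePresentation R N)
      (n : ℕ),
      Nonempty (((M ⧸ (Ideal.jacobson (⊥ : Ideal R) • (⊤ : Submodule R M))) ×
          (N ⧸ (Ideal.jacobson (⊥ : Ideal R) • (⊤ : Submodule R N)))) ≃ₗ[R]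
        (Fin n → R ⧸ Ideal.jacobson (⊥ : Ideal R))) := by
  obtain ⟨n, p, hp⟩ := Module.Finite.exists_fin' R M
  set J := Ideal.jacobson (⊥ : Ideal R)
  set JF : Submodule R (Fin n → R) := J • ⊤
  have := hR.isSemisimpleModule_quotient_jacobson_smul_top (Fin n → R)
  obtain ⟨C, hC⟩ := exists_isCompl ((LinearMap.ker p).map JF.mkQ)
  obtain ⟨L, hL, hLC⟩ :=
    exists_fg_map_eq_of_surjective JF.mkQ_surjective (IsNoetherian.noetherian C)
  have : Module.FinitePresentation R ((Fin n → R) ⧸ L) :=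
    Module.finitePresentation_of_surjective L.mkQ L.mkQ_surjective (by rwa [ker_mkQ])
  refine ⟨_, _, _, this, n, ⟨?_⟩⟩
  have eN : (((Fin n → R) ⧸ L) ⧸ J • (⊤ : Submodule R ((Fin n → R) ⧸ L))) ≃ₗ[R]
      ((Fin n → R) ⧸ JF) ⧸ C :=
    quotientSMulTopEquivOfSurjective J L.mkQ_surjective ≪≫ₗ
      quotEquivOfEq _ _ (by rw [ker_mkQ, hLC])
  exact (quotientSMulTopEquivOfSurjective J hp).prodCongr eN ≪≫ₗ
    quotientProdQuotientEquivOfIsCompl hC ≪≫ₗ J.quotientSMulTopPiEquiv (Fin n)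
end
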